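/- arXiv:math/0607412 — 2 statements merged into one kernel-verified Lean document; each statement's English description precedes it below -/
import Mathlib

section
/- Let A be a finite nonempty alphabet and n₁, n₂ ≥ 1. Identify a pair of automata A₁ = (λ₁, μ₁, γ₁) of dimension n₁ and A₂ = (λ₂, μ₂, γ₂) of dimension n₂ over ℝ with a point of ℝ^N, N = |A|(n₁²+n₂²) + 2(n₁+n₂). Then each of the following subsets of ℝ^N is a Lebesgue null set: (1) the set of pairs for which the sum automaton A₁ ⊞ A₂ (dimension n₁+n₂, with block-diagonal letter matrices, concatenated input row vectors and stacked output column vectors) is not a minimal linear representation of its behaviour; (2) the set of pairs for which the Cauchy-product automaton A₁ ⊡ A₂ (dimension n₁+n₂, with λ = (λ₁ 0), letter matrices [[μ₁(a), γ₁λ₂μ₂(a)],[0, μ₂(a)]], γ = (γ₁λ₂γ₂ ; γ₂)) is not a minimal linear representation of its behaviour; (3) the set of automata A₁ ∈ ℝ^{|A|n₁²+2n₁} for which the star automaton A₁* (dimension n₁+1, with λ* = (0 … 0 1), letter matrices [[μ₁(a)+γ₁λ₁μ₁(a), 0],[λ₁μ₁(a), 0]], γ* = (γ₁ ; 1)) is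 not a minimal linear representation of its behaviour. Consequently, for data chosen uniformly at random in bounded nontrivial disks, the compound automaton is minimal with probability 1. -/
open Matrix MeasureTheory

/-- Index set for the entries of an automaton of dimension `n` over alphabet `A`:
the entries of the letter matrices, of the input row vector and of the output
column vector; so `ℝ^{AutIdx A n} = ℝ^{|A|n²+2n}`. -/
abbrev AutIdx (A : Type*) (n : ℕ) : Type _ := (A × Fin n × Fin n) ⊕ (Fin n ⊕ Fin n)

/-- The input (row) vector of an automaton data point. -/
def lamOf {A : Type*} {n : ℕ} (x : AutIdx A n → ℝ) : Fin n → ℝ :=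
  fun i => x (Sum.inr (Sum.inl i))

/-- The output (column) vector of an automaton data point. -/
def gamOf {A : Type*} {n : ℕ} (x : AutIdx A n → ℝ) : Fin n → ℝ :=
  fun i => x (Sum.inr (Sum.inr i))

/-- The letter matrices of an automaton data point. -/
def muOf {A : Type*} {n : ℕ} (x : AutIdx A n → ℝ) : A → Matrix (Fin n) (Fin n) ℝ :=
  fun a => Matrix.of fun i j => x (Sum.inl (a, i, j))

/-- The matrix of a word: extend the letter matrices `μ` multiplicatively. -/
def wordMat {A : Type*} {d : Type*} [Fintype d] [DecidableEq d]
    (μ : A → Matrix d d ℝ) (w : List A) : Matrix d d ℝ :=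
  (w.map μ).prod

/-- The behaviour coefficient `λ μ(w) γ`. -/
def wordCoeff {A : Type*} {d : Type*} [Fintype d] [DecidableEq d]
    (lam : d → ℝ) (μ : A → Matrix d d ℝ) (gam : d → ℝ) (w : List A) : ℝ :=
  lam ⬝ᵥ (wordMat μ w *ᵥ gam)

/-- A series admits a linear representation of dimension `d`. -/
def hasRep {A : Type*} (S : List A → ℝ) (d : ℕ) : Prop :=
  ∃ (lam : Fin d → ℝ) (μ : A → Matrix (Fin d) (Fin d) ℝ) (gam : Fin d → ℝ),
    ∀ w, S w = wordCoeff lam μ gam w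

/-- Behaviour of the sum automaton `𝒜₁ ⊞ 𝒜₂` of a pair of automata. -/
def sumBehav {A : Type*} {n₁ n₂ : ℕ} (x : (AutIdx A n₁ ⊕ AutIdx A n₂) → ℝ) :
    List A → ℝ :=
  wordCoeff (Sum.elim (lamOf (x ∘ Sum.inl)) (lamOf (x ∘ Sum.inr)))
    (fun a => Matrix.fromBlocks (muOf (x ∘ Sum.inl) a) 0 0 (muOf (x ∘ Sum.inr) a))
    (Sum.elim (gamOf (x ∘ Sum.inl)) (gamOf (x ∘ Sum.inr)))

/-- Behaviour of the Cauchy-product automaton `𝒜₁ ⊡ 𝒜₂` of a pair of automata. -/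
def cauchyBehav {A : Type*} {n₁ n₂ : ℕ} (x : (AutIdx A n₁ ⊕ AutIdx A n₂) → ℝ) :
    List A → ℝ :=
  wordCoeff (Sum.elim (lamOf (x ∘ Sum.inl)) (fun _ => 0))
    (fun a => Matrix.fromBlocks (muOf (x ∘ Sum.inl) a)
      (Matrix.of fun i j => gamOf (x ∘ Sum.inl) i *
        (lamOf (x ∘ Sum.inr) ᵥ* muOf (x ∘ Sum.inr) a) j)
      0 (muOf (x ∘ Sum.inr) a))
    (Sum.elim (fun i => gamOf (x ∘ Sum.inl) i *
        (lamOf (x ∘ Sum.inr) ⬝ᵥ gamOf (x ∘ Sum.inr)))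
      (gamOf (x ∘ Sum.inr)))

/-- Behaviour of the star automaton `𝒜₁*` of an automaton. -/
def starBehav {A : Type*} {n : ℕ} (x : AutIdx A n → ℝ) : List A → ℝ :=
  wordCoeff (Sum.elim (fun _ : Fin n => (0 : ℝ)) (fun _ : Unit => (1 : ℝ)))
    (fun a => Matrix.fromBlocks
      (muOf x a + Matrix.of fun i j => gamOf x i * (lamOf x ᵥ* muOf x a) j) 0
      (Matrix.of fun _ j => (lamOf x ᵥ* muOf x a) j) 0)
    (Sum.elim (gamOf x) (fun _ : Unit => 1))


/-! ### Auxiliary machinery -/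

section Aux

open MeasureTheory

/-- Zero sets of nonzero multivariate polynomials over `Fin n` are Lebesgue-null. -/
lemma null_poly_fin : ∀ (n : ℕ) (P : MvPolynomial (Fin n) ℝ), P ≠ 0 →
    volume {x : Fin n → ℝ | MvPolynomial.eval x P = 0} = 0 := by
  intro n
  induction n with
  | zero =>
    intro P hP
    obtain ⟨a, rfl⟩ := MvPolynomial.C_surjective (Fin 0) P
    have ha : a ≠ 0 := fun h => hP (by simp [h])
    have : {x : Fin 0 → ℝ | MvPolynomial.eval x (MvPolynomial.C a) = 0} = ∅ := by
      ext x; simp [ha]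
    rw [this]; simp
  | succ n ih =>
    intro P hP
    have hmp := MeasureTheory.volume_preserving_piFinSuccAbove (fun _ : Fin (n+1) => ℝ) 0
    set e := MeasurableEquiv.piFinSuccAbove (fun _ : Fin (n+1) => ℝ) 0 with he
    set Q := MvPolynomial.finSuccEquiv ℝ n P with hQdef
    have hQ0 : Q ≠ 0 := by
      simpa [hQdef] using (AlgEquiv.injective (MvPolynomial.finSuccEquiv ℝ n)).ne_iff.mpr hP
    obtain ⟨k, hk⟩ : ∃ k, Q.coeff k ≠ 0 := by
      by_contra h
      push_neg at h
      exact hQ0 (Polynomial.ext fun k => by simp [h k])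
    set T : Set ((Fin n → ℝ) × ℝ) :=
      {p | Polynomial.eval p.2 (Q.map (MvPolynomial.eval p.1)) = 0} with hT
    have key : ∀ (s : Fin n → ℝ) (y : ℝ),
        Polynomial.eval y (Q.map (MvPolynomial.eval s)) = 0 ↔
          MvPolynomial.eval (Fin.cons y s) P = 0 := by
      intro s y
      rw [MvPolynomial.eval_eq_eval_mv_eval', hQdef]
    have hcont : Continuous (fun p : (Fin n → ℝ) × ℝ =>
        MvPolynomial.eval (Fin.cons p.2 p.1) P) := by
      apply (MvPolynomial.continuous_eval P).comp
      apply continuous_pi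
      intro i
      refine Fin.cases ?_ ?_ i
      · exact continuous_snd
      · intro j
        exact (continuous_apply j).comp continuous_fst
    have hTmeas : MeasurableSet T := by
      have : T = (fun p : (Fin n → ℝ) × ℝ =>
          MvPolynomial.eval (Fin.cons p.2 p.1) P) ⁻¹' {0} := by
        ext p; simp [hT, key]
      rw [this]
      exact hcont.measurable (measurableSet_singleton 0)
    have hT0 : volume T = 0 := by
      rw [MeasureTheory.Measure.volume_eq_prod]
      rw [MeasureTheory.Measure.measure_prod_null hTmeas]
      have hae : ∀ᵐ s : Fin n → ℝ, MvPolynomial.eval s (Q.coeff k) ≠ 0 := by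
        have h0 := ih (Q.coeff k) hk
        rw [← MeasureTheory.compl_mem_ae_iff] at *
        · simp only [Set.compl_setOf] at h0
          exact h0
      filter_upwards [hae] with s hs
      have hmapne : Q.map (MvPolynomial.eval s) ≠ 0 := by
        intro h
        apply hs
        have := congrArg (fun q => Polynomial.coeff q k) h
        simpa [Polynomial.coeff_map] using this
      have : Prod.mk s ⁻¹' T ⊆ {y : ℝ | Polynomial.IsRoot (Q.map (MvPolynomial.eval s)) y} := by
        intro y hy; exact hy
      exact measure_mono_null this ((Polynomial.finite_setOf_isRoot hmapne).measure_zero _)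
    have hS : {x : Fin (n+1) → ℝ | MvPolynomial.eval x P = 0} =
        e ⁻¹' (Prod.swap ⁻¹' T) := by
      ext x
      simp only [Set.mem_setOf_eq, Set.mem_preimage, he]
      have hx : e x = (x 0, fun j : Fin n => x (Fin.succAbove 0 j)) := rfl
      rw [hx]
      simp only [Prod.swap, hT, Set.mem_setOf_eq]
      rw [key]
      have : Fin.cons (x 0) (fun j : Fin n => x (Fin.succAbove 0 j)) = x := by
        exact Fin.cons_self_tail x
      rw [this]
    rw [hS]
    rw [hmp.measure_preimage]
    · rw [← hT0]
      have := (MeasureTheory.Measure.measurePreserving_swap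
        (μ := (volume : Measure ℝ)) (ν := (volume : Measure (Fin n → ℝ)))).measure_preimage
        (hTmeas.nullMeasurableSet)
      rw [MeasureTheory.Measure.volume_eq_prod]
      convert this using 2
      exact MeasureTheory.Measure.volume_eq_prod _ _
    · exact ((hTmeas.preimage measurable_swap)).nullMeasurableSet

/-- The subalgebra of coordinate-polynomial functions on `X → ℝ`. -/
noncomputable def coordAlg (X : Type*) : Subalgebra ℝ ((X → ℝ) → ℝ) :=
  Algebra.adjoin ℝ (Set.range fun i : X => fun x : X → ℝ => x i)

lemma null_poly_fintype {X : Type*} [Fintype X] (P : MvPolynomial X ℝ) (hP : P ≠ 0) :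
    volume {x : X → ℝ | MvPolynomial.eval x P = 0} = 0 := by
  classical
  set g : Fin (Fintype.card X) ≃ X := (Fintype.equivFin X).symm with hg
  have hmp := MeasureTheory.measurePreserving_piCongrLeft (fun _ : X => (volume : Measure ℝ)) g
  set m := MeasurableEquiv.piCongrLeft (fun _ : X => ℝ) g with hm
  have hmap : ∀ (y : Fin (Fintype.card X) → ℝ), m y = y ∘ ⇑g.symm := by
    intro y
    funext i'
    have h1 : m y = (Equiv.piCongrLeft (fun _ : X => ℝ) g) y := rfl
    rw [h1]
    have := Equiv.piCongrLeft_apply_apply (fun _ : X => ℝ) g y (g.symm i')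
    simpa using this
  have hset : m ⁻¹' {x : X → ℝ | MvPolynomial.eval x P = 0} =
      {y : Fin (Fintype.card X) → ℝ |
        MvPolynomial.eval y (MvPolynomial.rename g.symm P) = 0} := by
    ext y
    simp only [Set.mem_preimage, Set.mem_setOf_eq, MvPolynomial.eval_rename, hmap y]
  have hmeas : MeasurableSet {x : X → ℝ | MvPolynomial.eval x P = 0} := by
    have : {x : X → ℝ | MvPolynomial.eval x P = 0} =
        (fun x => MvPolynomial.eval x P) ⁻¹' {0} := rfl
    rw [this]
    exact (MvPolynomial.continuous_eval P).measurable (measurableSet_singleton 0)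
  have hpre := hmp.measure_preimage hmeas.nullMeasurableSet
  rw [hset] at hpre
  have hren : MvPolynomial.rename (⇑g.symm) P ≠ 0 := fun h =>
    hP (MvPolynomial.rename_injective _ g.symm.injective (by simpa using h))
  have hfin := null_poly_fin _ _ hren
  rw [MeasureTheory.volume_pi] at hfin ⊢
  rw [← hpre]
  exact hfin

/-- A coordinate-polynomial function that is somewhere nonzero has null zero set. -/
lemma null_of_mem_coordAlg {X : Type*} [Fintype X] (f : (X → ℝ) → ℝ)
    (hf : f ∈ coordAlg X) (x₀ : X → ℝ) (h0 : f x₀ ≠ 0) :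
    volume {x : X → ℝ | f x = 0} = 0 := by
  rw [coordAlg, Algebra.adjoin_range_eq_range_aeval] at hf
  obtain ⟨P, hP⟩ := hf
  have key : ∀ (Q : MvPolynomial X ℝ) (x : X → ℝ),
      (MvPolynomial.aeval (fun i : X => fun x : X → ℝ => x i) Q) x =
        MvPolynomial.eval x Q := by
    intro Q x
    induction Q using MvPolynomial.induction_on with
    | C a => simp
    | add p q hp hq => simp [hp, hq]
    | mul_X p i hp => simp [hp]
  have heval : ∀ x : X → ℝ, f x = MvPolynomial.eval x P := by
    intro x
    rw [← hP]
    exact (key P x).symm ▸ (key P x)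
  have hPne : P ≠ 0 := by
    intro h; rw [heval x₀, h] at h0; simp at h0
  have : {x : X → ℝ | f x = 0} = {x : X → ℝ | MvPolynomial.eval x P = 0} := by
    ext x; simp [heval]
  rw [this]
  exact null_poly_fintype P hPne

lemma wordMat_append' {A : Type*} {d : Type*} [Fintype d] [DecidableEq d]
    (μ : A → Matrix d d ℝ) (u v : List A) :
    wordMat μ (u ++ v) = wordMat μ u * wordMat μ v := by
  simp [wordMat]

lemma wordMat_const {A : Type*} {d : Type*} [Fintype d] [DecidableEq d]
    (M : Matrix d d ℝ) (w : List A) :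
    wordMat (fun _ => M) w = M ^ w.length := by
  simp [wordMat, List.map_const']

lemma wordMat_cons' {A : Type*} {d : Type*} [Fintype d] [DecidableEq d]
    (μ : A → Matrix d d ℝ) (a : A) (w : List A) :
    wordMat μ (a :: w) = μ a * wordMat μ w := by
  simp [wordMat]

/-- If a series has a representation of dimension `< n`, every `n × n`
Hankel-type minor vanishes. -/
lemma det_hankel_eq_zero {A : Type*} {S : List A → ℝ} {d n : ℕ}
    (h : hasRep S d) (hdn : d < n) (p q : Fin n → List A) :
    (Matrix.of fun i j => S (p i ++ q j)).det = 0 := by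
  obtain ⟨lam, μ, gam, hS⟩ := h
  set P : Matrix (Fin n) (Fin d) ℝ := Matrix.of fun i k => (lam ᵥ* wordMat μ (p i)) k with hP
  set Q : Matrix (Fin d) (Fin n) ℝ := Matrix.of fun k j => (wordMat μ (q j) *ᵥ gam) k with hQ
  have hfact : (Matrix.of fun i j => S (p i ++ q j)) = P * Q := by
    ext i j
    rw [Matrix.of_apply, hS, wordCoeff, wordMat_append', ← Matrix.mulVec_mulVec,
      Matrix.dotProduct_mulVec]
    simp [Matrix.mul_apply, hP, hQ, dotProduct]
  obtain ⟨v, hv0, hv⟩ : ∃ v ≠ 0, Q *ᵥ v = 0 := by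
    have hker : LinearMap.ker Q.mulVecLin ≠ ⊥ := by
      intro hbot
      have hinj : Function.Injective Q.mulVecLin :=
        LinearMap.ker_eq_bot.mp hbot
      have := LinearMap.finrank_le_finrank_of_injective hinj
      simp [Module.finrank_pi] at this
      omega
    obtain ⟨v, hv, hv0⟩ := (Submodule.ne_bot_iff _).mp hker
    exact ⟨v, hv0, hv⟩
  rw [hfact, ← Matrix.exists_mulVec_eq_zero_iff]
  exact ⟨v, hv0, by rw [← Matrix.mulVec_mulVec, hv, Matrix.mulVec_zero]⟩

/-- An "exponential sum" Hankel matrix with distinct bases and nonzero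
coefficients has nonzero determinant. -/
lemma det_expsum_ne_zero {R : Type*} [Fintype R] [DecidableEq R] {n : ℕ}
    (e : Fin n ≃ R) (ρ C : R → ℝ) (hρ : Function.Injective ρ) (hC : ∀ r, C r ≠ 0) :
    (Matrix.of fun i j : Fin n => ∑ r : R, C r * ρ r ^ ((i : ℕ) + (j : ℕ))).det ≠ 0 := by
  set W : Matrix (Fin n) (Fin n) ℝ := (Matrix.vandermonde (ρ ∘ e)).transpose with hW
  have hfact : (Matrix.of fun i j : Fin n => ∑ r : R, C r * ρ r ^ ((i : ℕ) + (j : ℕ)))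
      = W * (Matrix.diagonal (C ∘ e) * W.transpose) := by
    ext i j
    rw [Matrix.of_apply, Matrix.mul_apply]
    rw [← Equiv.sum_comp e (fun r => C r * ρ r ^ ((i:ℕ) + (j:ℕ)))]
    apply Finset.sum_congr rfl
    intro k _
    rw [Matrix.mul_apply]
    rw [Finset.sum_eq_single k]
    · simp [hW, Matrix.vandermonde, Matrix.diagonal, pow_add]
      ring
    · intro b _ hb
      simp [Matrix.diagonal_apply_ne' _ hb]
    · simp
  rw [hfact, Matrix.det_mul, Matrix.det_mul, Matrix.det_transpose, Matrix.det_diagonal]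
  have hvdm : (Matrix.vandermonde (ρ ∘ e)).det ≠ 0 := by
    rw [Matrix.det_vandermonde]
    rw [Finset.prod_ne_zero_iff]
    intro i _
    rw [Finset.prod_ne_zero_iff]
    intro j hj
    have : i ≠ j := by
      intro h; subst h; simp [Finset.mem_Ioi] at hj
    exact sub_ne_zero_of_ne fun hc => this (e.injective (hρ hc)).symm
  have hprod : (∏ k : Fin n, (C ∘ e) k) ≠ 0 :=
    Finset.prod_ne_zero_iff.mpr fun k _ => hC (e k)
  rw [hW, Matrix.det_transpose, Matrix.det_transpose]
  exact mul_ne_zero hvdm (mul_ne_zero hprod hvdm)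

section CoordAlgMem

variable {X : Type*}

lemma coord_mem (i : X) : (fun x : X → ℝ => x i) ∈ coordAlg X :=
  Algebra.subset_adjoin ⟨i, rfl⟩

lemma const_mem (c : ℝ) : (fun _ : X → ℝ => c) ∈ coordAlg X :=
  Subalgebra.algebraMap_mem _ c

lemma sum_fun_mem {ι : Type*} (s : Finset ι) (f : ι → (X → ℝ) → ℝ)
    (h : ∀ i ∈ s, f i ∈ coordAlg X) :
    (fun x => ∑ i ∈ s, f i x) ∈ coordAlg X := by
  have : (fun x => ∑ i ∈ s, f i x) = ∑ i ∈ s, f i := by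
    funext x; rw [Finset.sum_apply]
  rw [this]; exact Subalgebra.sum_mem _ h

lemma prod_fun_mem {ι : Type*} (s : Finset ι) (f : ι → (X → ℝ) → ℝ)
    (h : ∀ i ∈ s, f i ∈ coordAlg X) :
    (fun x => ∏ i ∈ s, f i x) ∈ coordAlg X := by
  have : (fun x => ∏ i ∈ s, f i x) = ∏ i ∈ s, f i := by
    funext x; rw [Finset.prod_apply]
  rw [this]; exact Subalgebra.prod_mem _ h

lemma wordMat_entry_mem {A : Type*} {d : Type*} [Fintype d] [DecidableEq d]
    (μ : (X → ℝ) → A → Matrix d d ℝ)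
    (hμ : ∀ a i j, (fun x => μ x a i j) ∈ coordAlg X) (w : List A) :
    ∀ i j : d, (fun x => wordMat (μ x) w i j) ∈ coordAlg X := by
  induction w with
  | nil =>
    intro i j
    have : (fun x : X → ℝ => wordMat (μ x) [] i j)
        = fun _ : X → ℝ => (if i = j then (1:ℝ) else 0) := by
      funext x
      simp [wordMat, Matrix.one_apply]
    rw [this]
    split_ifs <;> [exact const_mem 1; exact const_mem 0]
  | cons a w ih =>
    intro i j
    have : (fun x : X → ℝ => wordMat (μ x) (a :: w) i j)
        = fun x => ∑ k : d, μ x a i k * wordMat (μ x) w k j := by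
      funext x
      simp [wordMat, Matrix.mul_apply]
    rw [this]
    exact sum_fun_mem _ _ fun k _ => mul_mem (hμ a i k) (ih k j)

lemma wordCoeff_mem {A : Type*} {d : Type*} [Fintype d] [DecidableEq d]
    (lam gam : (X → ℝ) → d → ℝ) (μ : (X → ℝ) → A → Matrix d d ℝ)
    (hlam : ∀ i, (fun x => lam x i) ∈ coordAlg X)
    (hgam : ∀ i, (fun x => gam x i) ∈ coordAlg X)
    (hμ : ∀ a i j, (fun x => μ x a i j) ∈ coordAlg X) (w : List A) :
    (fun x => wordCoeff (lam x) (μ x) (gam x) w) ∈ coordAlg X := by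
  have : (fun x => wordCoeff (lam x) (μ x) (gam x) w)
      = fun x => ∑ i : d, lam x i * ∑ j : d, wordMat (μ x) w i j * gam x j := by
    funext x
    simp [wordCoeff, dotProduct, Matrix.mulVec]
  rw [this]
  exact sum_fun_mem _ _ fun i _ => mul_mem (hlam i)
    (sum_fun_mem _ _ fun j _ => mul_mem (wordMat_entry_mem μ hμ w i j) (hgam j))

lemma det_fun_mem {n : ℕ} (f : (X → ℝ) → Fin n → Fin n → ℝ)
    (h : ∀ i j, (fun x => f x i j) ∈ coordAlg X) :
    (fun x => (Matrix.of (f x)).det) ∈ coordAlg X := by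
  have : (fun x => (Matrix.of (f x)).det)
      = fun x => ∑ σ : Equiv.Perm (Fin n),
          ((Equiv.Perm.sign σ : ℤ) : ℝ) * ∏ i : Fin n, f x (σ i) i := by
    funext x
    rw [Matrix.det_apply']
    rfl
  rw [this]
  exact sum_fun_mem _ _ fun σ _ => mul_mem (const_mem _)
    (prod_fun_mem _ _ fun i _ => h (σ i) i)

end CoordAlgMem

/-- The master null lemma: a bad set contained in the zero set of a
coordinate-polynomial function that is somewhere nonzero is null. -/
lemma null_of_subset_zero_set {X : Type*} [Fintype X] (f : (X → ℝ) → ℝ)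
    (hf : f ∈ coordAlg X) (x₀ : X → ℝ) (h0 : f x₀ ≠ 0) (B : Set (X → ℝ))
    (hB : ∀ x ∈ B, f x = 0) : volume B = 0 :=
  measure_mono_null (fun x hx => hB x hx) (null_of_mem_coordAlg f hf x₀ h0)

/-- The Hankel determinant of the star witness sequence is nonzero. -/
lemma det_hankel_low_ne_zero (n : ℕ) (low : ℕ → ℕ)
    (hlow : ∀ m, low m = if m + 1 ≤ n + 1 then 1 else m + 1 - n) :
    (Matrix.of fun i j : Fin (n+1) => (low ((i:ℕ)+(j:ℕ)) : ℝ)).det ≠ 0 := by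
  intro hdet
  obtain ⟨v, hv0, hv⟩ := Matrix.exists_mulVec_eq_zero_iff.mpr hdet
  have hrow : ∀ i : Fin (n+1), ∑ j : Fin (n+1), (low ((i:ℕ)+(j:ℕ)) : ℝ) * v j = 0 := by
    intro i
    have := congrFun hv i
    simpa [Matrix.mulVec, dotProduct] using this
  have hdiff : ∀ i : ℕ, i < n →
      ∑ j : Fin (n+1), (if n ≤ i + (j:ℕ) then (1:ℝ) else 0) * v j = 0 := by
    intro i hi
    have h1 := hrow ⟨i+1, by omega⟩
    have h2 := hrow ⟨i, by omega⟩
    simp only [Fin.val_mk] at h1 h2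
    have key : ∀ j : Fin (n+1), (if n ≤ i + (j:ℕ) then (1:ℝ) else 0)
        = (low ((i+1) + (j:ℕ)) : ℝ) - low (i + (j:ℕ)) := by
      intro j
      have hnat : low ((i+1) + (j:ℕ)) = low (i + (j:ℕ)) + (if n ≤ i + (j:ℕ) then 1 else 0) := by
        rw [hlow, hlow]
        split_ifs <;> omega
      rw [hnat]
      push_cast
      split_ifs <;> ring
    have : ∑ j : Fin (n+1), (if n ≤ i + (j:ℕ) then (1:ℝ) else 0) * v j
        = ∑ j : Fin (n+1), ((low ((i+1) + (j:ℕ)) : ℝ) * v j - (low (i + (j:ℕ)) : ℝ) * v j) := by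
      refine Finset.sum_congr rfl fun j _ => ?_
      rw [key j]; ring
    rw [this, Finset.sum_sub_distrib, h1, h2, sub_zero]
  have key : ∀ s : ℕ, ∀ j : Fin (n+1), 1 ≤ (j:ℕ) → n + 1 - (j:ℕ) ≤ s → v j = 0 := by
    intro s
    induction s with
    | zero => intro j h1 h2; exact absurd h2 (by have := j.isLt; omega)
    | succ s ih =>
      intro j h1 h2
      have heq := hdiff (n - (j:ℕ)) (by have := j.isLt; omega)
      have hsingle : ∑ j' : Fin (n+1), (if n ≤ (n - (j:ℕ)) + (j':ℕ) then (1:ℝ) else 0) * v j'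
          = (if n ≤ (n - (j:ℕ)) + (j:ℕ) then (1:ℝ) else 0) * v j := by
        refine Finset.sum_eq_single j ?_ ?_
        · intro b _ hb
          by_cases hcond : n ≤ (n - (j:ℕ)) + (b:ℕ)
          · have hbj : (b:ℕ) ≠ (j:ℕ) := fun h => hb (Fin.ext h)
            have hbv : v b = 0 := by
              refine ih b ?_ ?_
              · have := j.isLt; omega
              · have := j.isLt; have := b.isLt; omega
            simp [hbv]
          · simp [hcond]
        · intro h; exact absurd (Finset.mem_univ j) h
      rw [hsingle] at heq
      have hc : n ≤ (n - (j:ℕ)) + (j:ℕ) := by have := j.isLt; omega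
      simpa [hc] using heq
  have hv1 : ∀ j : Fin (n+1), 1 ≤ (j:ℕ) → v j = 0 := fun j hj =>
    key (n+1) j hj (by omega)
  have h0 := hrow 0
  have hsingle0 : ∑ j : Fin (n+1), (low ((0:Fin (n+1)).val + (j:ℕ)) : ℝ) * v j
      = (low ((0:Fin (n+1)).val + (0:Fin (n+1)).val) : ℝ) * v 0 := by
    refine Finset.sum_eq_single 0 ?_ ?_
    · intro b _ hb
      have : v b = 0 := by
        refine hv1 b ?_
        have : (b:ℕ) ≠ 0 := fun h => hb (Fin.ext h)
        omega
      simp [this]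
    · intro h; exact absurd (Finset.mem_univ 0) h
  rw [hsingle0] at h0
  have hlow0 : low 0 = 1 := by rw [hlow]; simp
  simp only [Fin.val_zero, Nat.add_zero, hlow0, Nat.cast_one, one_mul] at h0
  apply hv0
  funext j
  rcases Nat.eq_zero_or_pos (j:ℕ) with h | h
  · have : j = 0 := Fin.ext h
    rw [this]; exact h0
  · exact hv1 j h

end Aux

/-- For a finite nonempty alphabet and `n₁, n₂ ≥ 1`, the set of pairs of
automata whose sum (resp. Cauchy-product) automaton is not a minimal representation of
its behaviour is Lebesgue-null in `ℝ^N`, and so is the set of automata whose star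
automaton is not minimal: minimality fails iff the behaviour admits a representation of
strictly smaller dimension. -/
theorem stmt_5 {A : Type*} [Fintype A] [Nonempty A] (n₁ n₂ : ℕ)
    (h₁ : 1 ≤ n₁) (h₂ : 1 ≤ n₂) :
    volume {x : (AutIdx A n₁ ⊕ AutIdx A n₂) → ℝ |
        ∃ d < n₁ + n₂, hasRep (sumBehav x) d} = 0 ∧
    volume {x : (AutIdx A n₁ ⊕ AutIdx A n₂) → ℝ |
        ∃ d < n₁ + n₂, hasRep (cauchyBehav x) d} = 0 ∧
    volume {x : AutIdx A n₁ → ℝ |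
        ∃ d < n₁ + 1, hasRep (starBehav x) d} = 0 := by
  classical
  refine ⟨?_, ?_, ?_⟩
  · -- sum automaton
    have a₀ : A := Classical.arbitrary A
    set word : ℕ → List A := fun k => List.replicate k a₀ with hword
    -- the witness point: diagonal automata with all-ones in/out vectors
    set gnat : Fin n₁ ⊕ Fin n₂ → ℕ := Sum.elim (fun m => (m:ℕ)+1) (fun l => n₁+(l:ℕ)+1)
      with hgnat
    set ρ : Fin n₁ ⊕ Fin n₂ → ℝ := fun r => (gnat r : ℝ) with hρ
    set x₀ : (AutIdx A n₁ ⊕ AutIdx A n₂) → ℝ :=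
      Sum.elim
        (Sum.elim (fun p : A × Fin n₁ × Fin n₁ =>
            if p.2.1 = p.2.2 then (ρ (Sum.inl p.2.1)) else 0) (fun _ => 1))
        (Sum.elim (fun p : A × Fin n₂ × Fin n₂ =>
            if p.2.1 = p.2.2 then (ρ (Sum.inr p.2.1)) else 0) (fun _ => 1)) with hx₀
    have hμdiag : (fun a : A => Matrix.fromBlocks (muOf (x₀ ∘ Sum.inl) a) 0 0
        (muOf (x₀ ∘ Sum.inr) a)) = fun _ => Matrix.diagonal ρ := by
      funext a
      have h1 : muOf (x₀ ∘ Sum.inl) a = Matrix.diagonal (fun m => ρ (Sum.inl m)) := by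
        ext i j
        by_cases h : i = j <;> simp [muOf, hx₀, Matrix.diagonal, h]
      have h2 : muOf (x₀ ∘ Sum.inr) a = Matrix.diagonal (fun l => ρ (Sum.inr l)) := by
        ext i j
        by_cases h : i = j <;> simp [muOf, hx₀, Matrix.diagonal, h]
      rw [h1, h2, Matrix.fromBlocks_diagonal]
      congr 1
      funext r
      cases r <;> rfl
    have hlam : (Sum.elim (lamOf (x₀ ∘ Sum.inl)) (lamOf (x₀ ∘ Sum.inr))
        : Fin n₁ ⊕ Fin n₂ → ℝ) = fun _ => 1 := by
      funext r; cases r <;> rfl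
    have hgam : (Sum.elim (gamOf (x₀ ∘ Sum.inl)) (gamOf (x₀ ∘ Sum.inr))
        : Fin n₁ ⊕ Fin n₂ → ℝ) = fun _ => 1 := by
      funext r; cases r <;> rfl
    have hbehav : ∀ w : List A, sumBehav x₀ w = ∑ r : Fin n₁ ⊕ Fin n₂, ρ r ^ w.length := by
      intro w
      rw [sumBehav, wordCoeff, hμdiag, hlam, hgam, wordMat_const, Matrix.diagonal_pow]
      simp [dotProduct, Matrix.mulVec_diagonal]
    refine null_of_subset_zero_set
      (fun x => (Matrix.of fun i j : Fin (n₁+n₂) =>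
        sumBehav x (word i ++ word j)).det) ?_ x₀ ?_ _ ?_
    · apply det_fun_mem
      intro i j
      apply wordCoeff_mem
      · intro r
        cases r <;> exact coord_mem _
      · intro r
        cases r <;> exact coord_mem _
      · intro a r r'
        cases r with
        | inl i =>
          cases r' with
          | inl j => exact coord_mem _
          | inr j => exact const_mem 0
        | inr i =>
          cases r' with
          | inl j => exact const_mem 0
          | inr j => exact coord_mem _
    · have hmat : (Matrix.of fun i j : Fin (n₁+n₂) => sumBehav x₀ (word i ++ word j))
          = Matrix.of fun i j : Fin (n₁+n₂) =>
              ∑ r : Fin n₁ ⊕ Fin n₂, (1:ℝ) * ρ r ^ ((i:ℕ) + (j:ℕ)) := by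
        ext i j
        rw [Matrix.of_apply, Matrix.of_apply, hbehav]
        simp [hword]
      show (Matrix.of fun i j : Fin (n₁+n₂) => sumBehav x₀ (word i ++ word j)).det ≠ 0
      rw [hmat]
      apply det_expsum_ne_zero finSumFinEquiv.symm ρ (fun _ => 1)
      · intro r r' hrr
        have : gnat r = gnat r' := Nat.cast_injective hrr
        rcases r with m | l <;> rcases r' with m' | l' <;>
          simp only [hgnat, Sum.elim_inl, Sum.elim_inr] at this <;>
          first
            | (congr 1; exact Fin.ext (by omega))
            | (exact absurd this (by have := m.isLt; have := l'.isLt; omega))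
            | (exact absurd this (by have := m'.isLt; have := l.isLt; omega))
      · intro r; norm_num
    · rintro x ⟨d, hd, hrep⟩
      exact det_hankel_eq_zero hrep hd _ _
  · -- Cauchy product automaton
    have a₀ : A := Classical.arbitrary A
    set word : ℕ → List A := fun k => List.replicate k a₀ with hword
    obtain ⟨tC, htC⟩ : ∃ t : Fin n₁ → ℝ, ∀ m, t m = (m:ℝ) + 2 := ⟨_, fun _ => rfl⟩
    obtain ⟨sC, hsC⟩ : ∃ s : Fin n₂ → ℝ, ∀ l, s l = ((l:ℝ) + 1)/((n₂:ℝ) + 1) :=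
      ⟨_, fun _ => rfl⟩
    have hspos : ∀ l, 0 < sC l := by
      intro l; rw [hsC]; positivity
    have hslt : ∀ l, sC l < 1 := by
      intro l
      rw [hsC, div_lt_one (by positivity)]
      have hl := l.isLt
      have : (l:ℝ) < (n₂:ℝ) := by exact_mod_cast hl
      linarith
    have htge : ∀ m, (2:ℝ) ≤ tC m := by
      intro m; rw [htC]; have : (0:ℝ) ≤ (m:ℝ) := Nat.cast_nonneg _; linarith
    have htspos : ∀ l m, 0 < tC m - sC l := by
      intro l m; have := hslt l; have := htge m; linarith
    obtain ⟨cC, hcC⟩ : ∃ c : Fin n₂ → Fin n₁ → ℝ,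
        ∀ l m, c l m = sC l / (tC m - sC l) := ⟨_, fun _ _ => rfl⟩
    have hcpos : ∀ l m, 0 < cC l m := by
      intro l m; rw [hcC]; exact div_pos (hspos l) (htspos l m)
    have hckey : ∀ l m, cC l m * (tC m - sC l) = sC l := by
      intro l m; rw [hcC]; exact div_mul_cancel₀ _ (ne_of_gt (htspos l m))
    obtain ⟨AC, hAC⟩ : ∃ a : Fin n₁ → ℝ, ∀ m, a m = (n₂:ℝ) + ∑ l, cC l m :=
      ⟨_, fun _ => rfl⟩
    obtain ⟨BC, hBC⟩ : ∃ b : Fin n₂ → ℝ, ∀ l, b l = -∑ m, cC l m := ⟨_, fun _ => rfl⟩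
    obtain ⟨evec, hevecl, hevecr⟩ : ∃ e : ℕ → (Fin n₁ ⊕ Fin n₂) → ℝ,
        (∀ k m, e k (Sum.inl m) = AC m * tC m ^ k - ∑ l, cC l m * sC l ^ k) ∧
        (∀ k l, e k (Sum.inr l) = sC l ^ k) := by
      refine ⟨fun k => Sum.elim (fun m => AC m * tC m ^ k - ∑ l, cC l m * sC l ^ k)
        (fun l => sC l ^ k), fun _ _ => rfl, fun _ _ => rfl⟩
    set x₁ : (AutIdx A n₁ ⊕ AutIdx A n₂) → ℝ :=
      Sum.elim
        (Sum.elim (fun p : A × Fin n₁ × Fin n₁ =>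
            if p.2.1 = p.2.2 then tC p.2.1 else 0) (fun _ => 1))
        (Sum.elim (fun p : A × Fin n₂ × Fin n₂ =>
            if p.2.1 = p.2.2 then sC p.2.1 else 0) (fun _ => 1)) with hx₁
    have hmu1 : ∀ a, muOf (x₁ ∘ Sum.inl) a = Matrix.diagonal tC := by
      intro a; ext i j
      by_cases h : i = j <;> simp [muOf, hx₁, Matrix.diagonal, h]
    have hmu2 : ∀ a, muOf (x₁ ∘ Sum.inr) a = Matrix.diagonal sC := by
      intro a; ext i j
      by_cases h : i = j <;> simp [muOf, hx₁, Matrix.diagonal, h]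
    have hlam1 : lamOf (x₁ ∘ Sum.inl) = fun _ => 1 := rfl
    have hlam2 : lamOf (x₁ ∘ Sum.inr) = fun _ => 1 := rfl
    have hgam1 : gamOf (x₁ ∘ Sum.inl) = fun _ => 1 := rfl
    have hgam2 : gamOf (x₁ ∘ Sum.inr) = fun _ => 1 := rfl
    obtain ⟨Mc, hMc⟩ : ∃ M : Matrix (Fin n₁ ⊕ Fin n₂) (Fin n₁ ⊕ Fin n₂) ℝ,
        M = Matrix.fromBlocks (Matrix.diagonal tC)
          (Matrix.of fun _ l => sC l) 0 (Matrix.diagonal sC) := ⟨_, rfl⟩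
    have hμc : (fun a : A => Matrix.fromBlocks (muOf (x₁ ∘ Sum.inl) a)
        (Matrix.of fun i j => gamOf (x₁ ∘ Sum.inl) i *
          (lamOf (x₁ ∘ Sum.inr) ᵥ* muOf (x₁ ∘ Sum.inr) a) j)
        0 (muOf (x₁ ∘ Sum.inr) a)) = fun _ => Mc := by
      funext a
      rw [hmu1, hmu2, hlam2, hgam1, hMc]
      congr 1
      ext i j
      simp [Matrix.vecMul_diagonal]
    have hγc : (Sum.elim (fun i => gamOf (x₁ ∘ Sum.inl) i *
          (lamOf (x₁ ∘ Sum.inr) ⬝ᵥ gamOf (x₁ ∘ Sum.inr)))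
        (gamOf (x₁ ∘ Sum.inr)) : Fin n₁ ⊕ Fin n₂ → ℝ) = evec 0 := by
      funext r
      cases r with
      | inl m =>
        rw [Sum.elim_inl, hevecl, hAC, hgam1, hlam2, hgam2]
        simp [dotProduct]
      | inr l =>
        rw [Sum.elim_inr, hevecr, hgam2]
        simp
    have hstep : ∀ k, Mc *ᵥ evec k = evec (k+1) := by
      intro k
      funext r
      cases r with
      | inl m =>
        rw [Matrix.mulVec, dotProduct, Fintype.sum_sum_type]
        simp only [hMc, Matrix.fromBlocks_apply₁₁, Matrix.fromBlocks_apply₁₂,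
          Matrix.of_apply]
        simp only [hevecl, hevecr]
        rw [Finset.sum_eq_single m]
        · have key : ∀ l : Fin n₂, sC l * sC l ^ k
              = tC m * (cC l m * sC l ^ k) - cC l m * sC l ^ (k+1) := by
            intro l
            have hc := hckey l m
            linear_combination (-(sC l ^ k)) * hc
          rw [Finset.sum_congr rfl (fun l _ => key l)]
          rw [Finset.sum_sub_distrib]
          rw [← Finset.mul_sum]
          simp only [Matrix.diagonal_apply_eq]
          ring
        · intro b _ hb
          simp [Matrix.diagonal_apply_ne' _ hb]
        · simp
      | inr l =>
        rw [Matrix.mulVec, dotProduct, Fintype.sum_sum_type]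
        simp only [hMc, Matrix.fromBlocks_apply₂₁, Matrix.fromBlocks_apply₂₂,
          Matrix.zero_apply, zero_mul, Finset.sum_const_zero, zero_add]
        simp only [hevecl, hevecr]
        rw [Finset.sum_eq_single l]
        · simp only [Matrix.diagonal_apply_eq]
          ring
        · intro b _ hb
          simp [Matrix.diagonal_apply_ne' _ hb]
        · simp
    have hstate : ∀ w : List A,
        wordMat (fun _ => Mc) w *ᵥ evec 0 = evec w.length := by
      intro w
      induction w with
      | nil => simp [wordMat]
      | cons a w ih =>
        rw [wordMat_cons', ← Matrix.mulVec_mulVec, ih]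
        exact hstep w.length
    have hbehav : ∀ w : List A, cauchyBehav x₁ w =
        ∑ r : Fin n₁ ⊕ Fin n₂, (Sum.elim AC BC r) * (Sum.elim tC sC r) ^ w.length := by
      intro w
      rw [cauchyBehav, wordCoeff, hμc, hγc, hstate]
      rw [Fintype.sum_sum_type]
      rw [dotProduct, Fintype.sum_sum_type]
      simp only [Sum.elim_inl, Sum.elim_inr, hlam1, one_mul, zero_mul,
        Finset.sum_const_zero, add_zero]
      simp only [hevecl]
      have hswap : ∑ m : Fin n₁, ∑ l : Fin n₂, cC l m * sC l ^ w.length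
          = ∑ l : Fin n₂, (∑ m : Fin n₁, cC l m) * sC l ^ w.length := by
        rw [Finset.sum_comm]
        exact Finset.sum_congr rfl fun l _ => (Finset.sum_mul _ _ _).symm
      rw [Finset.sum_sub_distrib, hswap, sub_eq_add_neg]
      congr 1
      rw [← Finset.sum_neg_distrib]
      exact Finset.sum_congr rfl fun l _ => by rw [hBC]; ring
    refine null_of_subset_zero_set
      (fun x => (Matrix.of fun i j : Fin (n₁+n₂) =>
        cauchyBehav x (word i ++ word j)).det) ?_ x₁ ?_ _ ?_
    · apply det_fun_mem
      intro i j
      apply wordCoeff_mem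
      · intro r
        cases r with
        | inl i => exact coord_mem _
        | inr i => exact const_mem 0
      · intro r
        cases r with
        | inl i =>
          have : (fun x : (AutIdx A n₁ ⊕ AutIdx A n₂) → ℝ =>
              Sum.elim (fun i => gamOf (x ∘ Sum.inl) i *
                  (lamOf (x ∘ Sum.inr) ⬝ᵥ gamOf (x ∘ Sum.inr)))
                (gamOf (x ∘ Sum.inr)) (Sum.inl i))
              = fun x => x (Sum.inl (Sum.inr (Sum.inr i))) *
                ∑ l : Fin n₂, x (Sum.inr (Sum.inr (Sum.inl l))) *
                  x (Sum.inr (Sum.inr (Sum.inr l))) := by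
            funext x
            simp [gamOf, lamOf, dotProduct]
          rw [this]
          exact mul_mem (coord_mem _) (sum_fun_mem _ _ fun l _ =>
            mul_mem (coord_mem _) (coord_mem _))
        | inr i => exact coord_mem _
      · intro a r r'
        cases r with
        | inl i =>
          cases r' with
          | inl j => exact coord_mem _
          | inr j =>
            have : (fun x : (AutIdx A n₁ ⊕ AutIdx A n₂) → ℝ =>
                Matrix.fromBlocks (muOf (x ∘ Sum.inl) a)
                  (Matrix.of fun i j => gamOf (x ∘ Sum.inl) i *
                    (lamOf (x ∘ Sum.inr) ᵥ* muOf (x ∘ Sum.inr) a) j)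
                  0 (muOf (x ∘ Sum.inr) a) (Sum.inl i) (Sum.inr j))
                = fun x => x (Sum.inl (Sum.inr (Sum.inr i))) *
                  ∑ l : Fin n₂, x (Sum.inr (Sum.inr (Sum.inl l))) *
                    x (Sum.inr (Sum.inl (a, l, j))) := by
              funext x
              simp [gamOf, lamOf, muOf, Matrix.vecMul, dotProduct]
            rw [this]
            exact mul_mem (coord_mem _) (sum_fun_mem _ _ fun l _ =>
              mul_mem (coord_mem _) (coord_mem _))
        | inr i =>
          cases r' with
          | inl j => exact const_mem 0
          | inr j => exact coord_mem _
    · have hmat : (Matrix.of fun i j : Fin (n₁+n₂) => cauchyBehav x₁ (word i ++ word j))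
          = Matrix.of fun i j : Fin (n₁+n₂) =>
              ∑ r : Fin n₁ ⊕ Fin n₂,
                (Sum.elim AC BC r) * (Sum.elim tC sC r) ^ ((i:ℕ) + (j:ℕ)) := by
        ext i j
        rw [Matrix.of_apply, Matrix.of_apply, hbehav]
        simp [hword]
      show (Matrix.of fun i j : Fin (n₁+n₂) => cauchyBehav x₁ (word i ++ word j)).det ≠ 0
      rw [hmat]
      apply det_expsum_ne_zero finSumFinEquiv.symm
      · intro r r' hrr
        rcases r with m | l <;> rcases r' with m' | l' <;>
          simp only [Sum.elim_inl, Sum.elim_inr] at hrr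
        · have : (m:ℝ) = (m':ℝ) := by rw [htC, htC] at hrr; linarith
          exact congrArg Sum.inl (Fin.ext (by exact_mod_cast this))
        · exact absurd hrr (by have := hslt l'; have := htge m; intro h; linarith)
        · exact absurd hrr (by have := hslt l; have := htge m'; intro h; linarith)
        · have : (l:ℝ) = (l':ℝ) := by
            rw [hsC, hsC, div_eq_div_iff (by positivity) (by positivity)] at hrr
            have hd : ((n₂:ℝ) + 1) ≠ 0 := by positivity
            field_simp at hrr
            linarith
          exact congrArg Sum.inr (Fin.ext (by exact_mod_cast this))
      · intro r
        cases r with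
        | inl m =>
          have hre : Sum.elim AC BC (Sum.inl m) = AC m := rfl
          rw [hre]
          have hpos : 0 < AC m := by
            rw [hAC]
            have h2 : 0 ≤ ∑ l, cC l m :=
              Finset.sum_nonneg fun l _ => le_of_lt (hcpos l m)
            have : (1:ℝ) ≤ (n₂:ℝ) := by exact_mod_cast h₂
            linarith
          exact ne_of_gt hpos
        | inr l =>
          have hpos : 0 < ∑ m, cC l m := by
            apply Finset.sum_pos (fun m _ => hcpos l m)
            haveI : Nonempty (Fin n₁) := Fin.pos_iff_nonempty.mp (by omega)
            exact Finset.univ_nonempty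
          have hre : Sum.elim AC BC (Sum.inr l) = BC l := rfl
          rw [hre, hBC]
          exact ne_of_lt (by linarith)
    · rintro x ⟨d, hd, hrep⟩
      exact det_hankel_eq_zero hrep hd _ _
  · -- star automaton
    have a₀ : A := Classical.arbitrary A
    set word : ℕ → List A := fun k => List.replicate k a₀ with hword
    obtain ⟨m, rfl⟩ : ∃ m, n₁ = m + 1 := ⟨n₁ - 1, by omega⟩
    obtain ⟨Gn, hGn⟩ : ∃ G : ℕ → ℕ → ℕ, ∀ k j,
        G k j = if j ≤ k then (if k + 2 ≤ (m+1) + j + 1 then 1 else k + 2 - (m+1) - j)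
          else 0 := ⟨_, fun _ _ => rfl⟩
    obtain ⟨low, hlow⟩ : ∃ L : ℕ → ℕ, ∀ q,
        L q = if q + 1 ≤ (m+1) + 1 then 1 else q + 1 - (m+1) := ⟨_, fun _ => rfl⟩
    obtain ⟨gvec, hgvec⟩ : ∃ g : ℕ → Fin (m+1) → ℝ, ∀ k i,
        g k i = (Gn k (((1 : Fin (m+1)) - i : Fin (m+1)) : ℕ) : ℝ) := ⟨_, fun _ _ => rfl⟩
    set x₂ : AutIdx A (m+1) → ℝ :=
      Sum.elim (fun p : A × Fin (m+1) × Fin (m+1) => if p.2.2 = p.2.1 + 1 then 1 else 0)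
        (Sum.elim (fun i => if i = 0 then 1 else 0) (fun i => if i = 1 then 1 else 0))
      with hx₂
    obtain ⟨Cmat, hCmat⟩ : ∃ M : Matrix (Fin (m+1)) (Fin (m+1)) ℝ,
        M = Matrix.of (fun i j => if j = i + 1 then (1:ℝ) else 0) := ⟨_, rfl⟩
    have hmu : ∀ a, muOf x₂ a = Cmat := by
      intro a; ext i j; rw [hCmat]; rfl
    have hlam : lamOf x₂ = fun i => if i = 0 then (1:ℝ) else 0 := rfl
    have hgam : gamOf x₂ = fun i => if i = 1 then (1:ℝ) else 0 := rfl
    have hrowvec : (lamOf x₂ ᵥ* Cmat) = fun j => if j = 1 then (1:ℝ) else 0 := by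
      funext j
      rw [hCmat, hlam]
      simp only [Matrix.vecMul, dotProduct, Matrix.of_apply, ite_mul, one_mul,
        zero_mul]
      rw [Finset.sum_eq_single (0 : Fin (m+1))]
      · rw [if_pos rfl, zero_add]
      · intro b _ hb; rw [if_neg hb]
      · intro h; exact absurd (Finset.mem_univ _) h
    obtain ⟨Bmat, hBmat⟩ : ∃ M : Matrix (Fin (m+1)) (Fin (m+1)) ℝ,
        M = Cmat + Matrix.of (fun i j =>
          (if i = 1 then (1:ℝ) else 0) * (if j = 1 then (1:ℝ) else 0)) := ⟨_, rfl⟩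
    obtain ⟨Ms, hMs⟩ : ∃ M : Matrix (Fin (m+1) ⊕ Unit) (Fin (m+1) ⊕ Unit) ℝ,
        M = Matrix.fromBlocks Bmat 0
          (Matrix.of fun _ j => if j = 1 then (1:ℝ) else 0) 0 := ⟨_, rfl⟩
    have hμs : (fun a : A => Matrix.fromBlocks
        (muOf x₂ a + Matrix.of fun i j => gamOf x₂ i * (lamOf x₂ ᵥ* muOf x₂ a) j) 0
        (Matrix.of fun _ j => (lamOf x₂ ᵥ* muOf x₂ a) j) 0) = fun _ => Ms := by
      funext a
      rw [hMs, hBmat, hmu, hrowvec, hgam]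
    -- ℕ-level facts
    have hR1 : ∀ k, k ≤ 2*(m+1) - 2 → Gn (k+1) 0 = Gn k m + Gn k 0 := by
      intro k hk
      rw [hGn, hGn, hGn]
      split_ifs <;> omega
    have hR2 : ∀ k j, 1 ≤ j → j ≤ m → Gn (k+1) j = Gn k (j-1) := by
      intro k j hj1 hjm
      rw [hGn, hGn]
      split_ifs <;> omega
    have hR3 : ∀ k, Gn k 0 = low (k+1) := by
      intro k
      rw [hGn, hlow]
      split_ifs <;> omega
    have hR4 : ∀ j, Gn 0 j = if j = 0 then 1 else 0 := by
      intro j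
      rw [hGn]
      split_ifs <;> omega
    have hR5 : low 0 = 1 := by rw [hlow]; split_ifs <;> omega
    have hγ0 : (Sum.elim (gamOf x₂) (fun _ : Unit => (1:ℝ)))
        = Sum.elim (gvec 0) (fun _ => (low 0 : ℝ)) := by
      funext r
      cases r with
      | inl i =>
        simp only [Sum.elim_inl, hgvec, hR4, hgam]
        by_cases hi : i = 1
        · subst hi
          rw [sub_self]
          simp
        · rw [if_neg hi, if_neg, Nat.cast_zero]
          intro h
          apply hi
          have h0 : (1 : Fin (m+1)) - i = 0 := Fin.ext h
          exact (sub_eq_zero.mp h0).symm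
      | inr u =>
        rw [Sum.elim_inr, Sum.elim_inr, hR5, Nat.cast_one]
    have hCapp : ∀ (u : Fin (m+1) → ℝ) (i : Fin (m+1)), (Cmat *ᵥ u) i = u (i+1) := by
      intro u i
      rw [hCmat]
      simp only [Matrix.mulVec, dotProduct, Matrix.of_apply, ite_mul, one_mul,
        zero_mul]
      rw [Finset.sum_eq_single (i+1)]
      · rw [if_pos rfl]
      · intro b _ hb; rw [if_neg hb]
      · intro h; exact absurd (Finset.mem_univ _) h
    have hEapp : ∀ (u : Fin (m+1) → ℝ) (i : Fin (m+1)),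
        ((Matrix.of fun i j => (if i = 1 then (1:ℝ) else 0) *
          (if j = 1 then (1:ℝ) else 0)) *ᵥ u) i = (if i = 1 then (1:ℝ) else 0) * u 1 := by
      intro u i
      simp only [Matrix.mulVec, dotProduct, Matrix.of_apply, mul_assoc]
      rw [← Finset.mul_sum]
      congr 1
      simp only [ite_mul, one_mul, zero_mul]
      rw [Finset.sum_eq_single (1 : Fin (m+1))]
      · rw [if_pos rfl]
      · intro b _ hb; rw [if_neg hb]
      · intro h; exact absurd (Finset.mem_univ _) h
    have hBstep : ∀ k, k ≤ 2*(m+1) - 2 → Bmat *ᵥ gvec k = gvec (k+1) := by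
      intro k hk
      funext i
      rw [hBmat, Matrix.add_mulVec, Pi.add_apply, hCapp, hEapp]
      by_cases hi : i = 1
      · subst hi
        rw [if_pos rfl, one_mul, hgvec, hgvec, hgvec]
        have h11 : (1 : Fin (m+1)) - 1 = 0 := sub_self 1
        have h12 : (1 : Fin (m+1)) - (1 + 1) = -1 := by rw [sub_add_eq_sub_sub, sub_self, zero_sub]
        rw [h11, h12]
        have hm1 : ((-1 : Fin (m+1)) : ℕ) = m := by
          rw [Fin.coe_neg_one]
        rw [hm1, Fin.val_zero, hR1 k hk]
        push_cast
        ring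
      · rw [if_neg hi, zero_mul, add_zero, hgvec, hgvec]
        have hj0 : (1 : Fin (m+1)) - i ≠ 0 := by
          intro h
          exact hi (sub_eq_zero.mp h).symm
        have h12 : (1 : Fin (m+1)) - (i + 1) = (1 - i) - 1 := by rw [sub_add_eq_sub_sub]
        rw [h12]
        have hcoe : (((1 : Fin (m+1)) - i - 1 : Fin (m+1)) : ℕ)
            = ((1 : Fin (m+1)) - i : Fin (m+1)).val - 1 := by
          rw [Fin.coe_sub_one, if_neg hj0]
        rw [hcoe]
        have hv1 : 1 ≤ ((1 : Fin (m+1)) - i : Fin (m+1)).val := by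
          have : ((1 : Fin (m+1)) - i).val ≠ 0 := fun h => hj0 (Fin.ext h)
          omega
        have hvm : ((1 : Fin (m+1)) - i : Fin (m+1)).val ≤ m := by
          have := ((1 : Fin (m+1)) - i).isLt
          omega
        rw [hR2 k _ hv1 hvm]
    have hMsapp : ∀ v : (Fin (m+1) ⊕ Unit) → ℝ,
        (Ms *ᵥ v) = Sum.elim (Bmat *ᵥ (v ∘ Sum.inl)) (fun _ => (v ∘ Sum.inl) 1) := by
      intro v
      funext r
      cases r with
      | inl i =>
        rw [hMs, Sum.elim_inl, Matrix.mulVec, dotProduct, Fintype.sum_sum_type]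
        simp only [Matrix.fromBlocks_apply₁₁, Matrix.fromBlocks_apply₁₂,
          Matrix.zero_apply, zero_mul, Finset.sum_const_zero, add_zero]
        rfl
      | inr u =>
        rw [hMs, Sum.elim_inr, Matrix.mulVec, dotProduct, Fintype.sum_sum_type]
        simp only [Matrix.fromBlocks_apply₂₁, Matrix.fromBlocks_apply₂₂,
          Matrix.zero_apply, zero_mul, Finset.sum_const_zero, add_zero, Matrix.of_apply,
          ite_mul, one_mul]
        rw [Finset.sum_eq_single (1 : Fin (m+1))]
        · rw [if_pos rfl]; rfl
        · intro b _ hb; rw [if_neg hb]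
        · intro h; exact absurd (Finset.mem_univ _) h
    have hstate : ∀ k, k ≤ 2*(m+1) - 1 →
        wordMat (fun _ : A => Ms) (word k) *ᵥ (Sum.elim (gamOf x₂) (fun _ : Unit => 1))
          = Sum.elim (gvec k) (fun _ => (low k : ℝ)) := by
      intro k
      induction k with
      | zero =>
        intro _
        rw [hword]
        simp only [List.replicate_zero]
        rw [show wordMat (fun _ : A => Ms) [] = 1 from rfl, Matrix.one_mulVec]
        exact hγ0
      | succ k ih =>
        intro hk
        have hw : word (k+1) = a₀ :: word k := rfl
        rw [hw, wordMat_cons', ← Matrix.mulVec_mulVec, ih (by omega), hMsapp]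
        funext r
        cases r with
        | inl i =>
          rw [Sum.elim_inl, Sum.elim_inl]
          have : (Sum.elim (gvec k) (fun _ : Unit => (low k : ℝ))) ∘ Sum.inl = gvec k :=
            rfl
          rw [this, hBstep k (by omega)]
        | inr u =>
          rw [Sum.elim_inr, Sum.elim_inr]
          show gvec k 1 = (low (k+1) : ℝ)
          rw [hgvec, sub_self, Fin.val_zero, hR3]
    have hbehav : ∀ q, q ≤ 2*(m+1) → starBehav x₂ (word q) = (low q : ℝ) := by
      intro q hq
      match q with
      | 0 =>
        rw [starBehav, wordCoeff, hR5]
        rw [hword]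
        simp only [List.replicate_zero]
        rw [show wordMat _ [] = (1 : Matrix (Fin (m+1) ⊕ Unit) (Fin (m+1) ⊕ Unit) ℝ)
          from rfl, Matrix.one_mulVec]
        rw [dotProduct, Fintype.sum_sum_type]
        simp
      | (k+1) =>
        rw [starBehav, wordCoeff, hμs]
        have hw : word (k+1) = a₀ :: word k := rfl
        rw [hw, wordMat_cons', ← Matrix.mulVec_mulVec, hstate k (by omega), hMsapp]
        rw [dotProduct, Fintype.sum_sum_type]
        simp only [Sum.elim_inl, Sum.elim_inr, zero_mul, Finset.sum_const_zero,
          one_mul, zero_add]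
        rw [Finset.univ_unique, Finset.sum_singleton]
        have : (Sum.elim (gvec k) (fun _ : Unit => (low k : ℝ))) ∘ Sum.inl = gvec k :=
          rfl
        rw [this, hgvec, sub_self, Fin.val_zero, hR3]
    refine null_of_subset_zero_set
      (fun x => (Matrix.of fun i j : Fin ((m+1)+1) =>
        starBehav x (word i ++ word j)).det) ?_ x₂ ?_ _ ?_
    · apply det_fun_mem
      intro i j
      apply wordCoeff_mem
      · intro r
        cases r with
        | inl i => exact const_mem 0
        | inr i => exact const_mem 1
      · intro r
        cases r with
        | inl i => exact coord_mem _
        | inr i => exact const_mem 1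
      · intro a r r'
        cases r with
        | inl i =>
          cases r' with
          | inl j =>
            have : (fun x : AutIdx A (m+1) → ℝ =>
                Matrix.fromBlocks
                  (muOf x a + Matrix.of fun i j => gamOf x i * (lamOf x ᵥ* muOf x a) j)
                  (0 : Matrix (Fin (m+1)) Unit ℝ)
                  (Matrix.of fun (_ : Unit) (j : Fin (m+1)) => (lamOf x ᵥ* muOf x a) j)
                  (0 : Matrix Unit Unit ℝ) (Sum.inl i) (Sum.inl j))
                = fun x => x (Sum.inl (a, i, j)) + x (Sum.inr (Sum.inr i)) *
                    ∑ l : Fin (m+1), x (Sum.inr (Sum.inl l)) * x (Sum.inl (a, l, j)) := by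
              funext x
              simp [muOf, gamOf, lamOf, Matrix.vecMul, dotProduct]
            rw [this]
            exact add_mem (coord_mem _) (mul_mem (coord_mem _)
              (sum_fun_mem _ _ fun l _ => mul_mem (coord_mem _) (coord_mem _)))
          | inr j =>
            have : (fun x : AutIdx A (m+1) → ℝ =>
                Matrix.fromBlocks
                  (muOf x a + Matrix.of fun i j => gamOf x i * (lamOf x ᵥ* muOf x a) j)
                  (0 : Matrix (Fin (m+1)) Unit ℝ)
                  (Matrix.of fun (_ : Unit) (j : Fin (m+1)) => (lamOf x ᵥ* muOf x a) j)
                  (0 : Matrix Unit Unit ℝ) (Sum.inl i) (Sum.inr j))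
                = fun _ => (0:ℝ) := by
              funext x
              simp
            rw [this]
            exact const_mem 0
        | inr i =>
          cases r' with
          | inl j =>
            have : (fun x : AutIdx A (m+1) → ℝ =>
                Matrix.fromBlocks
                  (muOf x a + Matrix.of fun i j => gamOf x i * (lamOf x ᵥ* muOf x a) j)
                  (0 : Matrix (Fin (m+1)) Unit ℝ)
                  (Matrix.of fun (_ : Unit) (j : Fin (m+1)) => (lamOf x ᵥ* muOf x a) j)
                  (0 : Matrix Unit Unit ℝ) (Sum.inr i) (Sum.inl j))
                = fun x => ∑ l : Fin (m+1), x (Sum.inr (Sum.inl l)) * x (Sum.inl (a, l, j)) := by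
              funext x
              simp [lamOf, muOf, Matrix.vecMul, dotProduct]
            rw [this]
            exact sum_fun_mem _ _ fun l _ => mul_mem (coord_mem _) (coord_mem _)
          | inr j =>
            have : (fun x : AutIdx A (m+1) → ℝ =>
                Matrix.fromBlocks
                  (muOf x a + Matrix.of fun i j => gamOf x i * (lamOf x ᵥ* muOf x a) j)
                  (0 : Matrix (Fin (m+1)) Unit ℝ)
                  (Matrix.of fun (_ : Unit) (j : Fin (m+1)) => (lamOf x ᵥ* muOf x a) j)
                  (0 : Matrix Unit Unit ℝ) (Sum.inr i) (Sum.inr j))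
                = fun _ => (0:ℝ) := by
              funext x
              simp
            rw [this]
            exact const_mem 0
    · have hmat : (Matrix.of fun i j : Fin ((m+1)+1) => starBehav x₂ (word i ++ word j))
          = Matrix.of fun i j : Fin ((m+1)+1) => (low ((i:ℕ)+(j:ℕ)) : ℝ) := by
        ext i j
        rw [Matrix.of_apply, Matrix.of_apply]
        have hww : word (i:ℕ) ++ word (j:ℕ) = word ((i:ℕ)+(j:ℕ)) := by
          rw [hword]
          exact (List.replicate_add _ _ _).symm
        rw [hww, hbehav _ (by have := i.isLt; have := j.isLt; omega)]
      show (Matrix.of fun i j : Fin ((m+1)+1) => starBehav x₂ (word i ++ word j)).det ≠ 0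
      rw [hmat]
      exact det_hankel_low_ne_zero (m+1) low hlow
    · rintro x ⟨d, hd, hrep⟩
      exact det_hankel_eq_zero hrep hd _ _
end

section
/- Let K be a ring of characteristic 0 and A a finite alphabet. A monoid congruence ≡ on A* is K-⧢ compatible if and only if it is generated by a set of relators each of type (LI) a ≡ b with a, b letters, or (LC) ab ≡ ba with a, b letters. -/
/-- The shuffle coproduct `c : K⟨A⟩ → K⟨A⟩ ⊗ K⟨A⟩`, `c(a) = a⊗1 + 1⊗a`, realized in the
monoid algebra of `A* × A*` (which is the tensor square, with basis `u ⊗ v` and product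
`(u₁⊗v₁)(u₂⊗v₂) = u₁u₂ ⊗ v₁v₂`), restricted to words. -/
noncomputable def cSh (K : Type*) [Semiring K] {A : Type*} :
    FreeMonoid A →* MonoidAlgebra K (FreeMonoid A × FreeMonoid A) :=
  FreeMonoid.lift fun a =>
    MonoidAlgebra.single (FreeMonoid.of a, 1) 1 +
      MonoidAlgebra.single (1, FreeMonoid.of a) 1

/-- The natural map `K⟨A⟩ ⊗ K⟨A⟩ → K[A*/≡] ⊗ K[A*/≡]` induced by the projection
`A* → A*/≡`; `P ≡^{⊗2} Q` means `tens2 r P = tens2 r Q`. -/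
noncomputable def tens2 {K A : Type*} [Semiring K] (r : Con (FreeMonoid A))
    (P : MonoidAlgebra K (FreeMonoid A × FreeMonoid A)) :
    MonoidAlgebra K (r.Quotient × r.Quotient) :=
  MonoidAlgebra.ofCoeff (Finsupp.mapDomain (fun p => (r.mk' p.1, r.mk' p.2)) P.coeff)

/-- A congruence `≡` on `A*` is `K`-⧢ compatible if `u ≡ v` implies
`c(u) ≡^{⊗2} c(v)` for the shuffle coproduct `c`. -/
def KShCompat (K : Type*) [Semiring K] {A : Type*} (r : Con (FreeMonoid A)) : Prop :=
  ∀ u v : FreeMonoid A, r u v → tens2 r (cSh K u) = tens2 r (cSh K v)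

/-- Relator of type (LE): `a ≡ 1` with `a` a letter (letter erasure). -/
def IsLE {A : Type*} (u v : FreeMonoid A) : Prop :=
  ∃ a : A, u = FreeMonoid.of a ∧ v = 1

/-- Relator of type (LI): `a ≡ b` with `a`, `b` letters (letter identification). -/
def IsLI {A : Type*} (u v : FreeMonoid A) : Prop :=
  ∃ a b : A, u = FreeMonoid.of a ∧ v = FreeMonoid.of b

/-- Relator of type (LC): `ab ≡ ba` with `a`, `b` letters (partial commutation). -/
def IsLC {A : Type*} (u v : FreeMonoid A) : Prop :=
  ∃ a b : A, u = FreeMonoid.of a * FreeMonoid.of b ∧ v = FreeMonoid.of b * FreeMonoid.of a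

open FreeMonoid

namespace Stmt19

theorem charZero_of_hchar {K : Type*} [Ring K] (hchar : ∀ k : ℕ, 0 < k → (k : K) ≠ 0) :
    CharZero K := by
  constructor
  intro m n h
  rcases Nat.lt_trichotomy m n with hlt | he | hlt
  · exfalso
    apply hchar (n - m) (by omega)
    rw [Nat.cast_sub hlt.le, ← h, sub_self]
  · exact he
  · exfalso
    apply hchar (m - n) (by omega)
    rw [Nat.cast_sub hlt.le, h, sub_self]

variable {K : Type*} [Ring K] {A : Type*}

/-- All ways to split a word into a (subword, complementary subword) pair. -/
def splits : List A → Multiset (FreeMonoid A × FreeMonoid A)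
  | [] => {(1, 1)}
  | a :: l =>
      (splits l).map (fun p => (of a * p.1, p.2)) +
        (splits l).map (fun p => (p.1, of a * p.2))

def phi (r : Con (FreeMonoid A)) (p : FreeMonoid A × FreeMonoid A) :
    r.Quotient × r.Quotient :=
  (r.mk' p.1, r.mk' p.2)

theorem cSh_eq (l : List A) :
    cSh K (ofList l) = ((splits l).map (fun p => MonoidAlgebra.single p (1 : K))).sum := by
  induction l with
  | nil =>
      simp [splits, MonoidAlgebra.one_def]; rfl
  | cons a l ih =>
      rw [ofList_cons, map_mul, ih]
      have ha : cSh K (of a) =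
          MonoidAlgebra.single ((of a : FreeMonoid A), (1 : FreeMonoid A)) (1 : K) +
            MonoidAlgebra.single ((1 : FreeMonoid A), (of a : FreeMonoid A)) (1 : K) := by
        simp [cSh]
      rw [ha, add_mul, splits]
      rw [Multiset.map_add, Multiset.sum_add, Multiset.map_map, Multiset.map_map]
      congr 1
      · rw [← Multiset.sum_map_mul_left]
        congr 1
        apply Multiset.map_congr rfl
        intro p _
        obtain ⟨p1, p2⟩ := p
        simp [MonoidAlgebra.single_mul_single, Prod.mk_mul_mk]
      · rw [← Multiset.sum_map_mul_left]
        congr 1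
        apply Multiset.map_congr rfl
        intro p _
        obtain ⟨p1, p2⟩ := p
        simp [MonoidAlgebra.single_mul_single, Prod.mk_mul_mk]

theorem tens2_sum_single (r : Con (FreeMonoid A)) (s : Multiset (FreeMonoid A × FreeMonoid A)) :
    tens2 r ((s.map (fun p => MonoidAlgebra.single p (1 : K))).sum) =
      ((s.map (fun p => MonoidAlgebra.single (phi r p) (1 : K))).sum) := by
  induction s using Multiset.induction_on with
  | empty => simp [tens2]
  | cons a s ih =>
      simp only [Multiset.map_cons, Multiset.sum_cons]
      simp only [tens2, MonoidAlgebra.coeff_add, Finsupp.mapDomain_add, MonoidAlgebra.ofCoeff_add] at ih ⊢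
      rw [ih, MonoidAlgebra.coeff_single, Finsupp.mapDomain_single, MonoidAlgebra.ofCoeff_single]
      rfl

theorem sum_single_apply {γ δ : Type*} [DecidableEq δ] (f : γ → δ) (s : Multiset γ) (x : δ) :
    ((s.map (fun q => MonoidAlgebra.single (f q) (1 : K))).sum : MonoidAlgebra K δ).coeff x
      = ((s.map f).count x : K) := by
  induction s using Multiset.induction_on with
  | empty => simp
  | cons a s ih =>
      simp only [Multiset.map_cons, Multiset.sum_cons, Multiset.count_cons]
      rw [MonoidAlgebra.coeff_add, Finsupp.add_apply, ih, MonoidAlgebra.coeff_single, Finsupp.single_apply]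
      by_cases h : x = f a
      · subst h; simp [add_comm]
      · have h' : ¬ (f a = x) := fun hh => h hh.symm
        simp [h, h']

/-- The key invariant extracted from shuffle compatibility, in char 0. -/
theorem inv_multiset (hchar : ∀ k : ℕ, 0 < k → (k : K) ≠ 0) {r : Con (FreeMonoid A)}
    (hK : KShCompat K r) {u v : FreeMonoid A} (huv : r u v) :
    (splits (toList u)).map (phi r) = (splits (toList v)).map (phi r) := by
  classical
  have hCZ : CharZero K := charZero_of_hchar hchar
  have h := hK u v huv
  rw [show u = ofList (toList u) from rfl, show v = ofList (toList v) from rfl] at h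
  rw [cSh_eq (K := K), cSh_eq (K := K), tens2_sum_single, tens2_sum_single] at h
  ext x
  have h2 : ((Multiset.map (fun p => MonoidAlgebra.single (phi r p) (1:K)) (splits (toList u))).sum).coeff x
      = ((Multiset.map (fun p => MonoidAlgebra.single (phi r p) (1:K)) (splits (toList v))).sum).coeff x := by
    rw [h]
  rw [sum_single_apply (phi r), sum_single_apply (phi r)] at h2
  exact Nat.cast_injective h2

section Comb

variable {K : Type*} [Ring K] {A : Type*}

theorem mk'_eq {r : Con (FreeMonoid A)} {x y : FreeMonoid A} :
    r.mk' x = r.mk' y ↔ r x y := by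
  rw [← Con.ker_rel r.mk', Con.mk'_ker]

variable (r : Con (FreeMonoid A))

def ident (a b : A) : Prop := r (FreeMonoid.of a) (FreeMonoid.of b)

def commL (a b : A) : Prop :=
  r (FreeMonoid.of a * FreeMonoid.of b) (FreeMonoid.of b * FreeMonoid.of a)

def rel0 : FreeMonoid A → FreeMonoid A → Prop :=
  fun u v => (IsLI u v ∨ IsLC u v) ∧ r u v

open Classical in
noncomputable def pi (a b c : A) : Option Bool :=
  if ident r c a then some true else if ident r c b then some false else none

noncomputable def piw (a b : A) (l : List A) : List Bool := l.filterMap (pi r a b)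

noncomputable def PW (a b : A) : FreeMonoid A →* FreeMonoid Bool :=
  FreeMonoid.lift (fun c => (pi r a b c).elim 1 of)

variable {r}

theorem ident_refl (a : A) : ident r a a := r.refl _
theorem ident_symm {a b : A} (h : ident r a b) : ident r b a := r.symm h
theorem ident_trans {a b c : A} (h1 : ident r a b) (h2 : ident r b c) : ident r a c :=
  r.trans h1 h2
theorem commL_symm {a b : A} (h : commL r a b) : commL r b a := r.symm h

theorem commL_transfer {a b c d : A} (h1 : ident r c a) (h2 : ident r d b)
    (h : commL r c d) : commL r a b := by
  have h3 : r (of a * of b) (of c * of d) := r.mul (r.symm h1) (r.symm h2)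
  have h4 : r (of d * of c) (of b * of a) := r.mul h2 h1
  exact r.trans h3 (r.trans h h4)

theorem cg_li {a b : A} (h : ident r a b) : conGen (rel0 r) (of a) (of b) :=
  ConGen.Rel.of _ _ ⟨Or.inl ⟨a, b, rfl, rfl⟩, h⟩

theorem cg_lc {a b : A} (h : commL r a b) : conGen (rel0 r) (of a * of b) (of b * of a) :=
  ConGen.Rel.of _ _ ⟨Or.inr ⟨a, b, rfl, rfl⟩, h⟩

theorem pi_eq_true {a b c : A} : pi r a b c = some true ↔ ident r c a := by
  unfold pi; split_ifs with h1 h2 <;> first | simp [h1, h2] | simp [h1]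

theorem pi_eq_false {a b c : A} :
    pi r a b c = some false ↔ (¬ ident r c a ∧ ident r c b) := by
  unfold pi; split_ifs with h1 h2 <;> first | simp [h1, h2] | simp [h1]

theorem pi_eq_none {a b c : A} :
    pi r a b c = none ↔ (¬ ident r c a ∧ ¬ ident r c b) := by
  unfold pi; split_ifs with h1 h2 <;> first | simp [h1, h2] | simp [h1]

theorem pi_ident {a b c d : A} (h : ident r c d) : pi r a b c = pi r a b d := by
  by_cases h1 : ident r c a
  · have h1' : ident r d a := ident_trans (ident_symm h) h1
    simp [pi, h1, h1']
  · have h1' : ¬ ident r d a := fun hh => h1 (ident_trans h hh)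
    by_cases h2 : ident r c b
    · have h2' : ident r d b := ident_trans (ident_symm h) h2
      simp [pi, h1, h1', h2, h2']
    · have h2' : ¬ ident r d b := fun hh => h2 (ident_trans h hh)
      simp [pi, h1, h1', h2, h2']

theorem toList_PW (a b : A) (l : List A) :
    toList (PW r a b (ofList l)) = piw r a b l := by
  induction l with
  | nil => rw [ofList_nil, map_one]; rfl
  | cons c l ih =>
      rw [ofList_cons, map_mul, toList_mul, ih]
      have : PW r a b (of c) = (pi r a b c).elim 1 of := FreeMonoid.lift_eval_of _ _
      rw [this]
      unfold piw
      rw [List.filterMap_cons]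
      cases h : pi r a b c <;> simp [h]

theorem piw_invariant {a b : A} (hnc : ¬ commL r a b) {u v : FreeMonoid A}
    (h : conGen (rel0 r) u v) :
    piw r a b (toList u) = piw r a b (toList v) := by
  have hle : conGen (rel0 r) ≤ Con.ker (PW r a b) := by
    apply Con.conGen_le.mpr
    rintro x y ⟨hLC | hLC, hr⟩
    · obtain ⟨a', b', rfl, rfl⟩ := hLC
      rw [Con.ker_rel]
      have : PW r a b (of a') = (pi r a b a').elim 1 of := FreeMonoid.lift_eval_of _ _
      rw [this, show PW r a b (of b') = (pi r a b b').elim 1 of from FreeMonoid.lift_eval_of _ _,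
        pi_ident (show ident r a' b' from hr)]
    · obtain ⟨a', b', rfl, rfl⟩ := hLC
      rw [Con.ker_rel, map_mul, map_mul]
      rw [show PW r a b (of a') = (pi r a b a').elim 1 of from FreeMonoid.lift_eval_of _ _,
        show PW r a b (of b') = (pi r a b b').elim 1 of from FreeMonoid.lift_eval_of _ _]
      have hcomm : commL r a' b' := hr
      rcases hc : pi r a b a' with _ | x <;> rcases hd : pi r a b b' with _ | y
      · simp
      · simp
      · simp
      · simp only [Option.elim]
        by_cases hxy : x = y
        · rw [hxy]
        · exfalso
          cases x <;> cases y
          · exact hxy rfl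
          · -- pi a' = false, pi b' = true : ident a' b, ident b' a
            exact hnc (commL_transfer (pi_eq_true.mp hd) (pi_eq_false.mp hc).2
              (commL_symm hcomm))
          · exact hnc (commL_transfer (pi_eq_true.mp hc) (pi_eq_false.mp hd).2 hcomm)
          · exact hxy rfl
  have h2 : PW r a b u = PW r a b v := (Con.ker_rel _).mp (Con.le_def.mp hle h)
  have h3 : toList (PW r a b (ofList (toList u))) = toList (PW r a b (ofList (toList v))) := by
    rw [ofList_toList, ofList_toList, h2]
  rwa [toList_PW, toList_PW] at h3

theorem split_first {a : A} :
    ∀ lv : List A, (∃ c ∈ lv, ident r c a) →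
      ∃ p c₀ rest, lv = p ++ c₀ :: rest ∧ ident r c₀ a ∧ ∀ c ∈ p, ¬ ident r c a := by
  intro lv
  induction lv with
  | nil => rintro ⟨c, hc, -⟩; cases hc
  | cons d lv ih =>
      intro hex
      by_cases hd : ident r d a
      · exact ⟨[], d, lv, rfl, hd, by simp⟩
      · obtain ⟨c, hc, hci⟩ := hex
        have hc' : c ∈ lv := by
          rcases List.mem_cons.mp hc with rfl | hc'
          · exact absurd hci hd
          · exact hc'
        obtain ⟨p, c₀, rest, heq, h1, h2⟩ := ih ⟨c, hc', hci⟩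
        refine ⟨d :: p, c₀, rest, by rw [heq]; rfl, h1, ?_⟩
        intro e he
        rcases List.mem_cons.mp he with rfl | he'
        · exact hd
        · exact h2 e he'

theorem move_front {c₀ : A} :
    ∀ p : List A, (∀ c ∈ p, commL r c c₀) →
      conGen (rel0 r) (ofList p * of c₀) (of c₀ * ofList p) := by
  intro p
  induction p with
  | nil =>
      intro _
      rw [ofList_nil, one_mul, mul_one]
      exact (conGen (rel0 r)).refl _
  | cons c p ih =>
      intro h
      have h1 := ih (fun e he => h e (List.mem_cons_of_mem _ he))
      have h2 : conGen (rel0 r) (of c * (ofList p * of c₀)) (of c * (of c₀ * ofList p)) :=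
        (conGen (rel0 r)).mul ((conGen (rel0 r)).refl _) h1
      have h3 := cg_lc (h c (List.mem_cons_self))
      have h4 : conGen (rel0 r) ((of c * of c₀) * ofList p) ((of c₀ * of c) * ofList p) :=
        (conGen (rel0 r)).mul h3 ((conGen (rel0 r)).refl _)
      rw [ofList_cons, mul_assoc]
      refine (conGen (rel0 r)).trans h2 ?_
      rw [← mul_assoc, ← mul_assoc]
      exact h4

def letterM (r : Con (FreeMonoid A)) (l : List A) : Multiset r.Quotient :=
  ↑(l.map (fun a => r.mk' (of a)))

theorem letterM_cons (a : A) (l : List A) :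
    letterM r (a :: l) = r.mk' (of a) ::ₘ letterM r l := rfl

theorem letterM_append (l₁ l₂ : List A) :
    letterM r (l₁ ++ l₂) = letterM r l₁ + letterM r l₂ := by
  simp [letterM]

theorem proj_lemma :
    ∀ lu lv : List A,
      letterM r lu = letterM r lv →
      (∀ a b : A, ¬ ident r a b → ¬ commL r a b → piw r a b lu = piw r a b lv) →
      conGen (rel0 r) (ofList lu) (ofList lv) := by
  intro lu
  induction lu with
  | nil =>
      intro lv hm _
      have hlv : lv = [] := by
        have h0 : letterM r lv = 0 := hm.symm
        simp [letterM, Multiset.coe_eq_zero, List.map_eq_nil_iff] at h0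
        exact h0
      rw [hlv]
      exact (conGen (rel0 r)).refl _
  | cons a lu' ih =>
      intro lv hm hp
      have hmem : r.mk' (of a) ∈ letterM r lv := by
        rw [← hm, letterM_cons]; exact Multiset.mem_cons_self _ _
      obtain ⟨c, hc, hci⟩ : ∃ c ∈ lv, ident r c a := by
        obtain ⟨c, hc, hce⟩ := List.mem_map.mp (by exact_mod_cast hmem)
        exact ⟨c, hc, mk'_eq.mp hce⟩
      obtain ⟨p, c₀, rest, heq, hident, hpni⟩ := split_first lv ⟨c, hc, hci⟩
      -- all letters of p commute with c₀
      have hcomm : ∀ e ∈ p, commL r e c₀ := by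
        intro e he
        by_contra hnc
        have hni : ¬ ident r e c₀ := fun hh => hpni e he (ident_trans hh hident)
        have hproj := hp e c₀ hni hnc
        have hpa : pi r e c₀ a = some false :=
          pi_eq_false.mpr ⟨fun hh => hpni e he (ident_symm hh), ident_symm hident⟩
        have hpe : pi r e c₀ e = some true := pi_eq_true.mpr (ident_refl e)
        have hpc₀ : pi r e c₀ c₀ = some false :=
          pi_eq_false.mpr ⟨fun hh => hni (ident_symm hh), ident_refl c₀⟩
        have hlhs : piw r e c₀ (a :: lu') = false :: piw r e c₀ lu' := by
          unfold piw; rw [List.filterMap_cons, hpa]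
        have hrhs : piw r e c₀ lv = piw r e c₀ p ++ (false :: piw r e c₀ rest) := by
          rw [heq]; unfold piw
          rw [List.filterMap_append, List.filterMap_cons, hpc₀]
        have htrue : true ∈ piw r e c₀ p :=
          List.mem_filterMap.mpr ⟨e, he, hpe⟩
        obtain ⟨x, xs, hxx⟩ := List.exists_cons_of_ne_nil (List.ne_nil_of_mem htrue)
        have hxtrue : x = true := by
          have hx : x ∈ piw r e c₀ p := by rw [hxx]; exact List.mem_cons_self
          obtain ⟨e', he', hpe'⟩ := List.mem_filterMap.mp hx
          cases x
          · exfalso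
            obtain ⟨-, h2⟩ := pi_eq_false.mp hpe'
            exact hpni e' he' (ident_trans h2 hident)
          · rfl
        rw [hlhs, hrhs, hxx] at hproj
        simp only [List.cons_append, List.cons.injEq] at hproj
        rw [hxtrue] at hproj
        exact Bool.noConfusion hproj.1
      -- move c₀ to the front of lv
      have hvmove : conGen (rel0 r) (ofList lv) (of a * ofList (p ++ rest)) := by
        have e1 : ofList lv = (ofList p * of c₀) * ofList rest := by
          rw [heq, ofList_append, ofList_cons, mul_assoc]
        have s1 : conGen (rel0 r) ((ofList p * of c₀) * ofList rest)
            ((of c₀ * ofList p) * ofList rest) :=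
          (conGen (rel0 r)).mul (move_front p hcomm) ((conGen (rel0 r)).refl _)
        have s2 : conGen (rel0 r) ((of c₀ * ofList p) * ofList rest)
            ((of a * ofList p) * ofList rest) :=
          (conGen (rel0 r)).mul ((conGen (rel0 r)).mul (cg_li hident) ((conGen (rel0 r)).refl _))
            ((conGen (rel0 r)).refl _)
        have e2 : (of a * ofList p) * ofList rest = of a * ofList (p ++ rest) := by
          rw [ofList_append, mul_assoc]
        rw [e1, ← e2]
        exact (conGen (rel0 r)).trans s1 s2
      -- recursive hypotheses
      have hm' : letterM r lu' = letterM r (p ++ rest) := by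
        have h1 : letterM r (a :: lu') = letterM r lv := hm
        rw [letterM_cons, heq, letterM_append, letterM_cons, Multiset.add_cons] at h1
        have hca : r.mk' (of c₀) = r.mk' (of a) := mk'_eq.mpr hident
        rw [hca] at h1
        rw [letterM_append]
        exact (Multiset.cons_inj_right _).mp h1
      have hp' : ∀ a' b' : A, ¬ ident r a' b' → ¬ commL r a' b' →
          piw r a' b' lu' = piw r a' b' (p ++ rest) := by
        intro a' b' hni' hnc'
        have hinv := piw_invariant hnc' hvmove
        have hlv2 : toList (of a * ofList (p ++ rest)) = a :: (p ++ rest) := rfl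
        rw [hlv2] at hinv
        have hall : piw r a' b' (a :: lu') = piw r a' b' (a :: (p ++ rest)) := by
          rw [← hinv]
          exact hp a' b' hni' hnc'
        unfold piw at hall ⊢
        rw [List.filterMap_cons, List.filterMap_cons] at hall
        cases hpa' : pi r a' b' a <;> rw [hpa'] at hall
        · exact hall
        · exact List.tail_eq_of_cons_eq hall
      have hrec := ih (p ++ rest) hm' hp'
      have hfin : conGen (rel0 r) (ofList (a :: lu')) (of a * ofList (p ++ rest)) := by
        rw [ofList_cons]
        exact (conGen (rel0 r)).mul ((conGen (rel0 r)).refl _) hrec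
      exact (conGen (rel0 r)).trans hfin ((conGen (rel0 r)).symm hvmove)

end Comb
section Decks

variable {K : Type*} [Ring K] {A : Type*}

def deck1 : List A → Multiset (A × List A)
  | [] => 0
  | a :: l => (a, l) ::ₘ (deck1 l).map (fun p => (p.1, a :: p.2))

theorem splits_card (l : List A) : Multiset.card (splits l) = 2 ^ l.length := by
  induction l with
  | nil => rfl
  | cons a l ih => simp [splits, ih]; ring

theorem length_eq (hchar : ∀ k : ℕ, 0 < k → (k : K) ≠ 0) {r : Con (FreeMonoid A)}
    (hK : KShCompat K r) {u v : FreeMonoid A} (huv : r u v) :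
    (toList u).length = (toList v).length := by
  have h := inv_multiset hchar hK huv
  have h2 := congrArg Multiset.card h
  rw [Multiset.card_map, Multiset.card_map, splits_card, splits_card] at h2
  exact Nat.pow_right_injective (le_refl 2) h2

theorem splits_filter_nil (l : List A) :
    (splits l).filter (fun p => (toList p.1).length = 0) =
      {((1 : FreeMonoid A), ofList l)} := by
  induction l with
  | nil =>
      show Multiset.filter _ {((1 : FreeMonoid A), (1 : FreeMonoid A))} = _
      rw [Multiset.filter_singleton, if_pos (show (toList ((1:FreeMonoid A),(1:FreeMonoid A)).1).length = 0 from rfl)]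
      rfl
  | cons a l ih =>
      rw [splits, Multiset.filter_add, Multiset.filter_map, Multiset.filter_map]
      have e1 : (splits l).filter
          ((fun p : FreeMonoid A × FreeMonoid A => (toList p.1).length = 0) ∘
            (fun p => (of a * p.1, p.2))) = 0 := by
        rw [Multiset.filter_eq_nil]
        intro p _
        show ¬ (toList (of a * p.1)).length = 0
        simp [toList_mul]
      have e2 : (splits l).filter
          ((fun p : FreeMonoid A × FreeMonoid A => (toList p.1).length = 0) ∘
            (fun p => (p.1, of a * p.2))) =
          (splits l).filter (fun p => (toList p.1).length = 0) := rfl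
      rw [e1, e2, ih]
      simp [ofList_cons]

theorem splits_filter_one (l : List A) :
    (splits l).filter (fun p => (toList p.1).length = 1) =
      (deck1 l).map (fun q => (of q.1, ofList q.2)) := by
  induction l with
  | nil =>
      show Multiset.filter _ {((1 : FreeMonoid A), (1 : FreeMonoid A))} = _
      rw [Multiset.filter_singleton, if_neg (show ¬ (toList ((1:FreeMonoid A),(1:FreeMonoid A)).1).length = 1 by simp)]
      simp [deck1]
  | cons a l ih =>
      rw [splits, Multiset.filter_add, Multiset.filter_map, Multiset.filter_map]
      have e1 : (splits l).filter
          ((fun p : FreeMonoid A × FreeMonoid A => (toList p.1).length = 1) ∘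
            (fun p => (of a * p.1, p.2))) =
          (splits l).filter (fun p => (toList p.1).length = 0) := by
        apply Multiset.filter_congr
        intro p _
        show (toList (of a * p.1)).length = 1 ↔ (toList p.1).length = 0
        rw [toList_mul]
        simp [toList_of]
      have e2 : (splits l).filter
          ((fun p : FreeMonoid A × FreeMonoid A => (toList p.1).length = 1) ∘
            (fun p => (p.1, of a * p.2))) =
          (splits l).filter (fun p => (toList p.1).length = 1) := rfl
      rw [e1, e2, ih, splits_filter_nil, deck1, Multiset.map_cons, Multiset.map_map,
        Multiset.map_map]
      have e3 : Multiset.map ((fun p : FreeMonoid A × FreeMonoid A => (p.1, of a * p.2)) ∘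
          (fun q : A × List A => (of q.1, ofList q.2))) (deck1 l) =
          Multiset.map ((fun q : A × List A => (of q.1, ofList q.2)) ∘
            (fun p : A × List A => (p.1, a :: p.2))) (deck1 l) := by
        apply Multiset.map_congr rfl
        intro q _
        show (of q.1, of a * ofList q.2) = (of q.1, ofList (a :: q.2))
        rw [ofList_cons]
      rw [e3]
      simp [mul_one, Multiset.singleton_add]

noncomputable def lenQ (r : Con (FreeMonoid A))
    (hlen : ∀ u v : FreeMonoid A, r u v → (toList u).length = (toList v).length) :
    r.Quotient → ℕ :=
  Quotient.lift (fun w : FreeMonoid A => (toList w).length) (fun u v h => hlen u v h)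

theorem deck_eq (hchar : ∀ k : ℕ, 0 < k → (k : K) ≠ 0) {r : Con (FreeMonoid A)}
    (hK : KShCompat K r) {u v : FreeMonoid A} (huv : r u v) :
    (deck1 (toList u)).map (fun q => phi r (of q.1, ofList q.2)) =
      (deck1 (toList v)).map (fun q => phi r (of q.1, ofList q.2)) := by
  classical
  have hlen : ∀ u v : FreeMonoid A, r u v → (toList u).length = (toList v).length :=
    fun _ _ h => length_eq hchar hK h
  have h := inv_multiset hchar hK huv
  have h2 := congrArg
    (Multiset.filter (fun q : r.Quotient × r.Quotient => lenQ r hlen q.1 = 1)) h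
  rw [Multiset.filter_map, Multiset.filter_map] at h2
  have e : ∀ l : List A, (splits l).filter
      ((fun q : r.Quotient × r.Quotient => lenQ r hlen q.1 = 1) ∘ phi r) =
      (splits l).filter (fun p => (toList p.1).length = 1) := by
    intro l
    apply Multiset.filter_congr
    intro p _
    exact Iff.rfl
  rw [e, e, splits_filter_one, splits_filter_one] at h2
  rw [Multiset.map_map, Multiset.map_map] at h2
  exact h2

theorem deck1_fst (l : List A) : (deck1 l).map Prod.fst = ↑l := by
  induction l with
  | nil => rfl
  | cons a l ih =>
      rw [deck1, Multiset.map_cons, Multiset.map_map]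
      have : (Prod.fst ∘ fun p : A × List A => (p.1, a :: p.2)) = Prod.fst := rfl
      rw [this, ih, Multiset.cons_coe]

theorem letters_eq (hchar : ∀ k : ℕ, 0 < k → (k : K) ≠ 0) {r : Con (FreeMonoid A)}
    (hK : KShCompat K r) {u v : FreeMonoid A} (huv : r u v) :
    letterM r (toList u) = letterM r (toList v) := by
  have h := deck_eq hchar hK huv
  have h2 := congrArg (Multiset.map (fun q : r.Quotient × r.Quotient => q.1)) h
  rw [Multiset.map_map, Multiset.map_map] at h2
  have e : ∀ l : List A, Multiset.map ((fun q : r.Quotient × r.Quotient => q.1) ∘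
      (fun q : A × List A => phi r (of q.1, ofList q.2))) (deck1 l) = letterM r l := by
    intro l
    have e1 : ((fun q : r.Quotient × r.Quotient => q.1) ∘
        (fun q : A × List A => phi r (of q.1, ofList q.2))) =
        ((fun a : A => r.mk' (of a)) ∘ Prod.fst) := rfl
    rw [e1, ← Multiset.map_map, deck1_fst]
    simp [letterM, Multiset.map_coe]
  rw [e, e] at h2
  exact h2

theorem deck1_mem_len : ∀ {l : List A} {q : A × List A},
    q ∈ deck1 l → q.2.length + 1 = l.length := by
  intro l
  induction l with
  | nil => intro q h; cases h
  | cons a l ih =>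
      intro q hq
      rcases Multiset.mem_cons.mp hq with rfl | hq'
      · simp
      · obtain ⟨p, hp, rfl⟩ := Multiset.mem_map.mp hq'
        have := ih hp
        simp only [List.length_cons] at this ⊢
        omega

theorem del_mem {r : Con (FreeMonoid A)} {a b : A} :
    ∀ {l : List A} {c : A}, c ∈ l → pi r a b c = none →
      ∃ t, (c, t) ∈ deck1 l ∧ piw r a b t = piw r a b l := by
  intro l
  induction l with
  | nil => intro c h; cases h
  | cons d l ih =>
      intro c hc hpc
      rcases List.mem_cons.mp hc with rfl | hc'
      · refine ⟨l, Multiset.mem_cons_self _ _, ?_⟩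
        unfold piw
        rw [List.filterMap_cons, hpc]
      · obtain ⟨t, ht, hpt⟩ := ih hc' hpc
        refine ⟨d :: t, ?_, ?_⟩
        · exact Multiset.mem_cons_of_mem (Multiset.mem_map.mpr ⟨(c, t), ht, rfl⟩)
        · unfold piw at hpt ⊢
          rw [List.filterMap_cons, List.filterMap_cons, hpt]

theorem del_mem2 {r : Con (FreeMonoid A)} {a b : A} :
    ∀ {l : List A} {c : A} {t : List A}, (c, t) ∈ deck1 l → pi r a b c = none →
      piw r a b t = piw r a b l := by
  intro l
  induction l with
  | nil => intro c t h; cases h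
  | cons d l ih =>
      intro c t hmem hpc
      rcases Multiset.mem_cons.mp hmem with heq | hmem'
      · obtain ⟨rfl, rfl⟩ := Prod.mk.injEq .. ▸ (Prod.ext_iff.mp heq)
        unfold piw
        rw [List.filterMap_cons, hpc]
      · obtain ⟨p, hp, hpeq⟩ := Multiset.mem_map.mp hmem'
        have hc : p.1 = c := congrArg Prod.fst hpeq
        have ht : d :: p.2 = t := congrArg Prod.snd hpeq
        subst hc; subst ht
        have := ih (show (p.1, p.2) ∈ deck1 l from hp) hpc
        unfold piw at this ⊢
        rw [List.filterMap_cons, List.filterMap_cons, this]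

theorem map_eq_map_trans {α β γ : Type*} {f : α → β} {g : α → γ} :
    ∀ (s t : Multiset α), (∀ x ∈ s, ∀ y ∈ t, f x = f y → g x = g y) →
      s.map f = t.map f → s.map g = t.map g := by
  intro s
  induction s using Multiset.induction_on with
  | empty =>
      intro t _ h
      rw [Multiset.map_zero] at h
      rw [Multiset.map_eq_zero.mp h.symm]
  | cons a s ih =>
      intro t hfg h
      have hmem : f a ∈ t.map f := by
        rw [← h, Multiset.map_cons]; exact Multiset.mem_cons_self _ _
      obtain ⟨b, hb, hfb⟩ := Multiset.mem_map.mp hmem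
      obtain ⟨t', rfl⟩ := Multiset.exists_cons_of_mem hb
      rw [Multiset.map_cons, Multiset.map_cons, ← hfb] at h
      have h' : s.map f = t'.map f := (Multiset.cons_inj_right _).mp h
      have hg : s.map g = t'.map g := ih t'
        (fun x hx y hy => hfg x (Multiset.mem_cons_of_mem hx) y (Multiset.mem_cons_of_mem hy)) h'
      rw [Multiset.map_cons, Multiset.map_cons, hg,
        hfg a (Multiset.mem_cons_self _ _) b (Multiset.mem_cons_self _ _) hfb.symm]

def deckB : List Bool → Multiset (List Bool)
  | [] => 0
  | x :: l => l ::ₘ (deckB l).map (x :: ·)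

theorem deckB_card (l : List Bool) : Multiset.card (deckB l) = l.length := by
  induction l with
  | nil => rfl
  | cons x l ih => simp [deckB, ih]

theorem cons_injective_bool (a : Bool) : Function.Injective (a :: · : List Bool → List Bool) :=
  fun x y h => (List.cons.injEq _ _ _ _ ▸ h).2

theorem rec_aux (a : Bool) :
    ∀ (l m : List Bool), l.length = m.length → ∀ k : ℕ, 0 < k →
      Multiset.replicate k l + (deckB l).map (a :: ·) =
        Multiset.replicate k m + (deckB m).map (a :: ·) → l = m := by
  intro l
  induction l with
  | nil =>
      intro m hlen _ _ _
      exact (List.length_eq_zero_iff.mp hlen.symm).symm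
  | cons x l' ih =>
      intro m hlen k hk heq
      rcases m with _ | ⟨y, m'⟩
      · simp at hlen
      by_cases hxa : x = a
      · by_cases hya : y = a
        · rw [hxa, hya] at heq ⊢
          have expand : ∀ w : List Bool,
              Multiset.replicate k (a :: w) + (deckB (a :: w)).map (a :: ·) =
                Multiset.map (a :: ·)
                  (Multiset.replicate (k + 1) w + (deckB w).map (a :: ·)) := by
            intro w
            rw [deckB, Multiset.map_cons, Multiset.add_cons, Multiset.map_add,
              Multiset.map_replicate, Multiset.replicate_succ, Multiset.cons_add]
          rw [expand, expand] at heq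
          have heq' := Multiset.map_injective (cons_injective_bool a) heq
          have hlen' : l'.length = m'.length := by simpa using hlen
          exact congrArg (a :: ·) (ih m' hlen' (k + 1) (Nat.succ_pos _) heq')
        · -- y ≠ a : show m ∈ LHS, m must be in the replicate part
          have hmem : (y :: m') ∈ Multiset.replicate k (x :: l') + (deckB (x :: l')).map (a :: ·) := by
            rw [heq]
            exact Multiset.mem_add.mpr (Or.inl (Multiset.mem_replicate.mpr ⟨hk.ne', rfl⟩))
          rcases Multiset.mem_add.mp hmem with hm1 | hm2
          · exact ((Multiset.mem_replicate.mp hm1).2).symm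
          · exfalso
            obtain ⟨w, _, hw⟩ := Multiset.mem_map.mp hm2
            have hh := congrArg List.head? hw
            simp at hh
            exact hya hh.symm
      · -- x ≠ a : l ∈ RHS, must be in replicate part
        have hmem : (x :: l') ∈ Multiset.replicate k (y :: m') + (deckB (y :: m')).map (a :: ·) := by
          rw [← heq]
          exact Multiset.mem_add.mpr (Or.inl (Multiset.mem_replicate.mpr ⟨hk.ne', rfl⟩))
        rcases Multiset.mem_add.mp hmem with hm1 | hm2
        · exact (Multiset.mem_replicate.mp hm1).2
        · exfalso
          obtain ⟨w, _, hw⟩ := Multiset.mem_map.mp hm2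
          have hh := congrArg List.head? hw
          simp at hh
          exact hxa hh.symm

theorem reconstruct :
    ∀ l m : List Bool, 3 ≤ l.length → l.length = m.length → deckB l = deckB m → l = m := by
  intro l m h3 hlen hdeck
  classical
  rcases l with _ | ⟨x, l'⟩
  · simp at h3
  rcases m with _ | ⟨y, m'⟩
  · simp at hlen
  have hxy : x = y := by
    by_contra hne
    have c1 : Multiset.countP (fun w : List Bool => w.head? = some y) (deckB (x :: l')) ≤ 1 := by
      rw [deckB, Multiset.countP_cons, Multiset.countP_map]
      have : (deckB l').filter (fun w => (x :: w).head? = some y) = 0 := by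
        rw [Multiset.filter_eq_nil]
        intro w _
        simp only [List.head?_cons, Option.some.injEq]
        intro hh
        apply hne
        first
        | exact hh
        | exact hh.symm
      rw [this]
      simp
      split_ifs <;> simp
    have c2 : 2 ≤ Multiset.countP (fun w : List Bool => w.head? = some y) (deckB (y :: m')) := by
      rw [deckB, Multiset.countP_cons, Multiset.countP_map]
      have : (deckB m').filter (fun w => (y :: w).head? = some y) = deckB m' := by
        rw [Multiset.filter_eq_self]
        intro w _
        simp
      rw [this, deckB_card]
      have : 2 ≤ m'.length := by
        simp at hlen h3
        omega
      omega
    rw [hdeck] at c1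
    omega
  subst hxy
  have heq : Multiset.replicate 1 l' + (deckB l').map (x :: ·) =
      Multiset.replicate 1 m' + (deckB m').map (x :: ·) := by
    have := hdeck
    rw [deckB, deckB] at this
    simpa [Multiset.replicate_one, Multiset.singleton_add] using this
  have hlen' : l'.length = m'.length := by simpa using hlen
  exact congrArg (x :: ·) (rec_aux x l' m' hlen' 1 one_pos heq)

end Decks
section Main

variable {K : Type*} [Ring K] {A : Type*}

theorem deck1_proj {r : Con (FreeMonoid A)} {a b : A} :
    ∀ l : List A, (∀ c ∈ l, pi r a b c ≠ none) →
      (deck1 l).map (fun q => piw r a b q.2) = deckB (piw r a b l) := by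
  intro l
  induction l with
  | nil => intro _; rfl
  | cons d l ih =>
      intro hall
      obtain ⟨x, hx⟩ := Option.ne_none_iff_exists'.mp (hall d (List.mem_cons_self))
      have hpiw : piw r a b (d :: l) = x :: piw r a b l := by
        unfold piw; rw [List.filterMap_cons, hx]
      rw [deck1, Multiset.map_cons, hpiw, deckB, Multiset.map_map]
      congr 1
      have e : ((fun q : A × List A => piw r a b q.2) ∘ (fun p : A × List A => (p.1, d :: p.2)))
          = ((x :: ·) ∘ (fun q : A × List A => piw r a b q.2)) := by
        funext q
        show piw r a b (d :: q.2) = x :: piw r a b q.2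
        unfold piw; rw [List.filterMap_cons, hx]
      rw [e, ← Multiset.map_map, ih (fun c hc => hall c (List.mem_cons_of_mem _ hc))]

theorem piw_length {r : Con (FreeMonoid A)} {a b : A} :
    ∀ l : List A, (∀ c ∈ l, pi r a b c ≠ none) → (piw r a b l).length = l.length := by
  intro l
  induction l with
  | nil => intro _; rfl
  | cons d l ih =>
      intro hall
      obtain ⟨x, hx⟩ := Option.ne_none_iff_exists'.mp (hall d (List.mem_cons_self))
      unfold piw
      rw [List.filterMap_cons, hx]
      simp only [List.length_cons]
      rw [show (List.filterMap (pi r a b) l).length = l.length from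
        ih (fun c hc => hall c (List.mem_cons_of_mem _ hc))]

theorem main_claim (hchar : ∀ k : ℕ, 0 < k → (k : K) ≠ 0) {r : Con (FreeMonoid A)}
    (hK : KShCompat K r) :
    ∀ n : ℕ, ∀ u v : FreeMonoid A, (toList u).length = n → r u v →
      conGen (rel0 r) u v := by
  intro n
  induction n using Nat.strong_induction_on with
  | _ n IH =>
  intro u v hlen huv
  have hlenv : (toList v).length = n := by
    rw [← length_eq hchar hK huv]; exact hlen
  have hm := letters_eq hchar hK huv
  have hp : ∀ a b : A, ¬ ident r a b → ¬ commL r a b →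
      piw r a b (toList u) = piw r a b (toList v) := by
    intro a b hni hnc
    by_cases hall : ∀ c ∈ toList u, pi r a b c ≠ none
    · -- every letter of u projects; same for v
      have hallv : ∀ d ∈ toList v, pi r a b d ≠ none := by
        intro d hd
        have hmemd : r.mk' (of d) ∈ letterM r (toList v) := by
          simp only [letterM, Multiset.mem_coe]
          exact List.mem_map.mpr ⟨d, hd, rfl⟩
        rw [← hm] at hmemd
        obtain ⟨c, hc, hce⟩ : ∃ c ∈ toList u, r.mk' (of c) = r.mk' (of d) := by
          simp only [letterM, Multiset.mem_coe] at hmemd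
          obtain ⟨c, hc, hce⟩ := List.mem_map.mp hmemd
          exact ⟨c, hc, hce⟩
        have hident : ident r c d := mk'_eq.mp hce
        rw [← pi_ident hident]
        exact hall c hc
      by_cases h3 : 3 ≤ n
      · -- reconstruction case
        have hdeck := deck_eq hchar hK huv
        have hfg : ∀ x ∈ deck1 (toList u), ∀ y ∈ deck1 (toList v),
            (fun q : A × List A => phi r (of q.1, ofList q.2)) x =
              (fun q : A × List A => phi r (of q.1, ofList q.2)) y →
            (fun q : A × List A => piw r a b q.2) x =
              (fun q : A × List A => piw r a b q.2) y := by
          intro x hx y hy hphi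
          have h2 : r (ofList x.2) (ofList y.2) := by
            have hsnd := congrArg Prod.snd hphi
            exact mk'_eq.mp hsnd
          have hlx : x.2.length + 1 = n := by rw [← hlen]; exact deck1_mem_len hx
          have hcg := IH x.2.length (by omega) (ofList x.2) (ofList y.2)
            (by rw [toList_ofList]) h2
          have hinv := piw_invariant hnc hcg
          rw [toList_ofList, toList_ofList] at hinv
          exact hinv
        have htrans := map_eq_map_trans (deck1 (toList u)) (deck1 (toList v)) hfg hdeck
        rw [deck1_proj (toList u) hall, deck1_proj (toList v) hallv] at htrans
        apply reconstruct _ _ _ _ htrans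
        · rw [piw_length _ hall, hlen]; exact h3
        · rw [piw_length _ hall, piw_length _ hallv, hlen, hlenv]
      · -- n ≤ 2 : small cases
        interval_cases n
        · -- n = 0
          rw [List.length_eq_zero_iff.mp hlen, List.length_eq_zero_iff.mp hlenv]
        · -- n = 1
          obtain ⟨c, hu⟩ := List.length_eq_one_iff.mp hlen
          obtain ⟨d, hv⟩ := List.length_eq_one_iff.mp hlenv
          have huc : u = of c := by rw [← ofList_toList u, hu]; rfl
          have hvd : v = of d := by rw [← ofList_toList v, hv]; rfl
          have hident : ident r c d := by rw [huc, hvd] at huv; exact huv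
          rw [hu, hv]
          unfold piw
          rw [List.filterMap_cons, List.filterMap_cons, pi_ident hident]
        · -- n = 2
          obtain ⟨c, d, hu⟩ : ∃ c d, toList u = [c, d] := by
            rcases hlu : toList u with _ | ⟨c, _ | ⟨d, _ | _⟩⟩ <;>
              rw [hlu] at hlen <;> simp at hlen
            exact ⟨c, d, rfl⟩
          obtain ⟨e, f, hv⟩ : ∃ e f, toList v = [e, f] := by
            rcases hlv : toList v with _ | ⟨e, _ | ⟨f, _ | _⟩⟩ <;>
              rw [hlv] at hlenv <;> simp at hlenv
            exact ⟨e, f, rfl⟩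
          have hucd : u = of c * of d := by rw [← ofList_toList u, hu]; rfl
          have hvef : v = of e * of f := by rw [← ofList_toList v, hv]; rfl
          have hcdr : r (of c * of d) (of e * of f) := by rw [← hucd, ← hvef]; exact huv
          have hdeck := deck_eq hchar hK huv
          rw [hu, hv] at hdeck
          have hdeck2 : (phi r (of c, ofList [d])) ::ₘ {phi r (of d, ofList [c])} =
              (phi r (of e, ofList [f])) ::ₘ {phi r (of f, ofList [e])} := by
            simpa [deck1] using hdeck
          have hcases : (phi r (of c, ofList [d]) = phi r (of e, ofList [f]) ∧
                phi r (of d, ofList [c]) = phi r (of f, ofList [e])) ∨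
              (phi r (of c, ofList [d]) = phi r (of f, ofList [e]) ∧
                phi r (of d, ofList [c]) = phi r (of e, ofList [f])) := by
            rcases Multiset.cons_eq_cons.mp hdeck2 with ⟨h1, h2⟩ | ⟨h1, cs, h2, h3⟩
            · exact Or.inl ⟨h1, Multiset.singleton_inj.mp h2⟩
            · have hcs : cs = 0 := by
                have h4 := congrArg Multiset.card h2
                simpa using h4
              rw [hcs, Multiset.cons_zero] at h2 h3
              exact Or.inr ⟨(Multiset.singleton_inj.mp h3).symm,
                Multiset.singleton_inj.mp h2⟩
          rw [hu, hv]
          rcases hcases with ⟨h1, h2⟩ | ⟨h1, h2⟩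
          · have hce : ident r c e := mk'_eq.mp (congrArg Prod.fst h1)
            have hdf : ident r d f := mk'_eq.mp (congrArg Prod.fst h2)
            unfold piw
            rw [List.filterMap_cons, List.filterMap_cons, List.filterMap_cons,
              List.filterMap_cons, pi_ident hce, pi_ident hdf]
          · have hcf : ident r c f := mk'_eq.mp (congrArg Prod.fst h1)
            have hde : ident r d e := mk'_eq.mp (congrArg Prod.fst h2)
            by_cases hcd : pi r a b c = pi r a b d
            · unfold piw
              rw [List.filterMap_cons, List.filterMap_cons, List.filterMap_cons,
                List.filterMap_cons, show pi r a b e = pi r a b d from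
                  (pi_ident hde).symm, show pi r a b f = pi r a b c from
                  (pi_ident hcf).symm, hcd]
            · exfalso
              -- derive commL c d then commL a b, contradiction
              have hcomm_cd : commL r c d := by
                have h1' : r (of e * of f) (of d * of c) :=
                  r.mul (r.symm hde) (r.symm hcf)
                exact r.trans hcdr h1'
              obtain ⟨xc, hxc⟩ := Option.ne_none_iff_exists'.mp
                (hall c (by rw [hu]; exact List.mem_cons_self))
              obtain ⟨xd, hxd⟩ := Option.ne_none_iff_exists'.mp
                (hall d (by rw [hu]; exact List.mem_cons_of_mem _ (List.mem_cons_self)))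
              cases xc <;> cases xd
              · exact hcd (hxc.trans hxd.symm)
              · -- pi c = false, pi d = true: ident c b, ident d a
                exact hnc (commL_transfer (pi_eq_true.mp hxd) (pi_eq_false.mp hxc).2
                  (commL_symm hcomm_cd))
              · exact hnc (commL_transfer (pi_eq_true.mp hxc) (pi_eq_false.mp hxd).2
                  hcomm_cd)
              · exact hcd (hxc.trans hxd.symm)
    · -- some letter of u does not project
      classical
      push_neg at hall
      obtain ⟨c, hcmem, hcnone⟩ := hall
      obtain ⟨t, htmem, htp⟩ := del_mem hcmem hcnone
      have hdeck := deck_eq hchar hK huv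
      set pq : r.Quotient × r.Quotient → Prop :=
        fun q => q.1 ≠ r.mk' (of a) ∧ q.1 ≠ r.mk' (of b) with hpq
      have hfil := congrArg (Multiset.filter pq) hdeck
      rw [Multiset.filter_map, Multiset.filter_map] at hfil
      have hpqc : (pq ∘ (fun q : A × List A => phi r (of q.1, ofList q.2))) (c, t) := by
        constructor
        · exact fun hh => (pi_eq_none.mp hcnone).1 (mk'_eq.mp hh)
        · exact fun hh => (pi_eq_none.mp hcnone).2 (mk'_eq.mp hh)
      have hmem1 : phi r (of c, ofList t) ∈
          Multiset.map (fun q : A × List A => phi r (of q.1, ofList q.2))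
            ((deck1 (toList u)).filter
              (pq ∘ (fun q : A × List A => phi r (of q.1, ofList q.2)))) :=
        Multiset.mem_map.mpr ⟨(c, t), Multiset.mem_filter.mpr ⟨htmem, hpqc⟩, rfl⟩
      rw [hfil] at hmem1
      obtain ⟨w, hwmem, hweq⟩ := Multiset.mem_map.mp hmem1
      obtain ⟨hwdeck, hwpq⟩ := Multiset.mem_filter.mp hwmem
      have hdnone : pi r a b w.1 = none := by
        apply pi_eq_none.mpr
        exact ⟨fun hh => hwpq.1 (mk'_eq.mpr hh), fun hh => hwpq.2 (mk'_eq.mpr hh)⟩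
      have hst : r (ofList w.2) (ofList t) := mk'_eq.mp (congrArg Prod.snd hweq)
      have hwlen : w.2.length + 1 = n := by rw [← hlenv]; exact deck1_mem_len hwdeck
      have hcg := IH w.2.length (by omega) (ofList w.2) (ofList t)
        (by rw [toList_ofList]) hst
      have hinv := piw_invariant hnc hcg
      rw [toList_ofList, toList_ofList] at hinv
      have hw2 : piw r a b w.2 = piw r a b (toList v) :=
        del_mem2 (show (w.1, w.2) ∈ deck1 (toList v) from hwdeck) hdnone
      rw [← htp, ← hinv, hw2]
  have := proj_lemma (toList u) (toList v) hm hp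
  rwa [ofList_toList, ofList_toList] at this

theorem hard_direction (hchar : ∀ k : ℕ, 0 < k → (k : K) ≠ 0) {r : Con (FreeMonoid A)}
    (hK : KShCompat K r) : r = conGen (rel0 r) := by
  apply le_antisymm
  · rw [Con.le_def]
    intro x y h
    exact main_claim hchar hK _ x y rfl h
  · exact Con.conGen_le.mpr (fun x y h => h.2)

theorem easy_direction {rel : FreeMonoid A → FreeMonoid A → Prop}
    (h : ∀ u v, rel u v → IsLI u v ∨ IsLC u v) : KShCompat K (conGen rel) := by
  set r : Con (FreeMonoid A) := conGen rel with hr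
  have hfe : (fun p : FreeMonoid A × FreeMonoid A => (r.mk' p.1, r.mk' p.2)) =
      ⇑(MonoidHom.prodMap r.mk' r.mk') := by
    funext p
    obtain ⟨p1, p2⟩ := p
    rfl
  have tmul : ∀ P Q : MonoidAlgebra K (FreeMonoid A × FreeMonoid A),
      tens2 r (P * Q) = tens2 r P * tens2 r Q := by
    intro P Q
    simp only [tens2, hfe]
    exact MonoidAlgebra.mapDomain_mul (MonoidHom.prodMap r.mk' r.mk') P Q
  have hsingle : ∀ (c : A), cSh K (of c) =
      MonoidAlgebra.single ((of c : FreeMonoid A), (1 : FreeMonoid A)) (1:K) +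
        MonoidAlgebra.single ((1 : FreeMonoid A), (of c : FreeMonoid A)) (1:K) := by
    intro c; simp [cSh]
  have tsingle : ∀ (c : A), tens2 r (cSh K (of c)) =
      MonoidAlgebra.single ((r.mk' (of c), (1 : r.Quotient))) (1:K) +
        MonoidAlgebra.single (((1 : r.Quotient), r.mk' (of c))) (1:K) := by
    intro c
    rw [hsingle c]
    simp only [tens2, MonoidAlgebra.coeff_add, MonoidAlgebra.coeff_single, Finsupp.mapDomain_add,
      Finsupp.mapDomain_single, MonoidAlgebra.ofCoeff_add, MonoidAlgebra.ofCoeff_single]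
    rw [map_one r.mk']
  have tpair : ∀ (c d : A), tens2 r (cSh K (of c * of d)) =
      MonoidAlgebra.single ((r.mk' (of c * of d), (1 : r.Quotient))) (1:K) +
      (MonoidAlgebra.single ((r.mk' (of c), r.mk' (of d))) (1:K) +
      (MonoidAlgebra.single ((r.mk' (of d), r.mk' (of c))) (1:K) +
      MonoidAlgebra.single (((1 : r.Quotient), r.mk' (of c * of d))) (1:K))) := by
    intro c d
    rw [map_mul, tmul, tsingle, tsingle, add_mul, mul_add, mul_add,
      MonoidAlgebra.single_mul_single, MonoidAlgebra.single_mul_single,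
      MonoidAlgebra.single_mul_single, MonoidAlgebra.single_mul_single]
    simp only [Prod.mk_mul_mk, one_mul, mul_one, map_mul]
    abel
  set Φ : FreeMonoid A →* MonoidAlgebra K (r.Quotient × r.Quotient) :=
    { toFun := fun w => tens2 r (cSh K w),
      map_one' := by
        show tens2 r (cSh K 1) = 1
        rw [map_one, MonoidAlgebra.one_def]
        simp only [tens2]
        rw [MonoidAlgebra.coeff_single, Finsupp.mapDomain_single, MonoidAlgebra.ofCoeff_single]
        simp [MonoidAlgebra.one_def]; rfl,
      map_mul' := fun x y => by
        show tens2 r (cSh K (x * y)) = tens2 r (cSh K x) * tens2 r (cSh K y)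
        rw [map_mul, tmul] } with hPhi
  intro u v huv
  have hle : r ≤ Con.ker Φ := by
    apply Con.conGen_le.mpr
    intro x y hxy
    rw [Con.ker_rel]
    rcases h x y hxy with ⟨a, b, rfl, rfl⟩ | ⟨a, b, rfl, rfl⟩
    · show tens2 r (cSh K (of a)) = tens2 r (cSh K (of b))
      have hab : r (of a) (of b) := ConGen.Rel.of _ _ hxy
      rw [tsingle, tsingle, mk'_eq.mpr hab]
    · show tens2 r (cSh K (of a * of b)) = tens2 r (cSh K (of b * of a))
      have hab : r (of a * of b) (of b * of a) := ConGen.Rel.of _ _ hxy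
      rw [tpair, tpair, mk'_eq.mpr hab]
      abel
  exact (Con.ker_rel Φ).mp (Con.le_def.mp hle huv)

end Main
end Stmt19


/-- Let `K` be a ring of characteristic `0` (`r·1_K ≠ 0` for all
`r ≥ 1`). A congruence on `A*` is `K`-⧢ compatible iff it is generated by relators of
type (LI) `a ≡ b` or (LC) `ab ≡ ba` with `a`, `b` letters. -/
theorem stmt_19 {K A : Type*} [Ring K] [Fintype A]
    (hchar : ∀ k : ℕ, 0 < k → (k : K) ≠ 0) (r : Con (FreeMonoid A)) :
    KShCompat K r ↔
      ∃ rel : FreeMonoid A → FreeMonoid A → Prop,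
        (∀ u v, rel u v → IsLI u v ∨ IsLC u v) ∧ r = conGen rel := by
  constructor
  · intro hK
    exact ⟨Stmt19.rel0 r, fun u v h => h.1, Stmt19.hard_direction hchar hK⟩
  · rintro ⟨rel, hLC, rfl⟩
    exact Stmt19.easy_direction hLC
end
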